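/- arXiv:2411.15649 — 6 statements merged into one kernel-verified Lean document; each statement's English description precedes it below -/
import Mathlib

section
/- For every positive integer n, there exists a red-blue coloring of the triples of {1,…,r(3;n)−1} that contains no red monotone path on n+2 vertices and no blue copy of any member of the family 𝒥_n of monotone paths with n jumps. Consequently r(3;n) ≤ R(P_{n+2}, 𝒥_n). -/
/-!
Common definitions.

A red-blue coloring of the triples of `{1,…,N}` is modelled as a function
`c : ℕ → ℕ → ℕ → Bool`, where `c u v w = true` means the triple `(u,v,w)`
(with `u < v < w`) is colored red, and `false` means blue.

An `n`-coloring of the pairs of `{1,…,N}` is a function `χ : ℕ → ℕ → Fin n`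
(only its values on pairs `u < v` in `{1,…,N}` matter).
-/

/-- `p` (restricted to indices `1,…,k`) is a red monotone path on `k` vertices
inside `{1,…,N}` under the red-blue triple coloring `c`. -/
def IsRedPath (N k : ℕ) (c : ℕ → ℕ → ℕ → Bool) (p : ℕ → ℕ) : Prop :=
  (∀ i, 1 ≤ i → i ≤ k → 1 ≤ p i ∧ p i ≤ N) ∧
  (∀ i j, 1 ≤ i → i < j → j ≤ k → p i < p j) ∧
  (∀ i, 1 ≤ i → i + 2 ≤ k → c (p i) (p (i + 1)) (p (i + 2)) = true)

/-- There is a red monotone path on `k` vertices inside `{1,…,N}`. -/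
def HasRedPath (N k : ℕ) (c : ℕ → ℕ → ℕ → Bool) : Prop :=
  ∃ p : ℕ → ℕ, IsRedPath N k c p

/-- `f` (restricted to indices `1,…,m`) is a blue copy, inside `{1,…,N}` under the
red-blue triple coloring `c`, of the ordered 3-uniform hypergraph on `{1,…,m}`
with edge relation `E`. -/
def IsBlueCopy (N m : ℕ) (E : ℕ → ℕ → ℕ → Prop) (c : ℕ → ℕ → ℕ → Bool) (f : ℕ → ℕ) : Prop :=
  (∀ i, 1 ≤ i → i ≤ m → 1 ≤ f i ∧ f i ≤ N) ∧
  (∀ i j, 1 ≤ i → i < j → j ≤ m → f i < f j) ∧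
  (∀ a b d, E a b d → c (f a) (f b) (f d) = false)

/-- The pair coloring `χ` has a monochromatic triangle inside `{1,…,N}`. -/
def HasMonoTriangle (N n : ℕ) (χ : ℕ → ℕ → Fin n) : Prop :=
  ∃ u v w, 1 ≤ u ∧ u < v ∧ v < w ∧ w ≤ N ∧ χ u v = χ v w ∧ χ u v = χ u w

/-- The pair coloring `χ` has a monochromatic complete subgraph on `m` vertices
inside `{1,…,N}`. -/
def HasMonoClique (N m n : ℕ) (χ : ℕ → ℕ → Fin n) : Prop :=
  ∃ S : Finset ℕ, S ⊆ Finset.Icc 1 N ∧ S.card = m ∧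
    ∃ k : Fin n, ∀ u ∈ S, ∀ v ∈ S, u < v → χ u v = k

/-- The multicolor Ramsey number `r(m;n)`: the least `N` such that every `n`-coloring
of the pairs of `{1,…,N}` contains a monochromatic complete subgraph on `m` vertices. -/
noncomputable def multicolorRamsey (m n : ℕ) : ℕ :=
  sInf {N | ∀ χ : ℕ → ℕ → Fin n, HasMonoClique N m n χ}

/-- The multicolor Ramsey number `r(3;n)` for triangles: the least `N` such that every
`n`-coloring of the pairs of `{1,…,N}` contains a monochromatic triangle. -/
noncomputable def r3 (n : ℕ) : ℕ :=
  sInf {N | ∀ χ : ℕ → ℕ → Fin n, HasMonoTriangle N n χ}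

/-- A member of the family `𝒥ₙ`: a monotone path with `n` jumps. It is an ordered
3-uniform hypergraph on vertex set `{1,…,m}` with edge relation `E` (written on
increasing triples), containing all consecutive triples, together with a jump set
`J ⊆ {2,…,m-1}` of size `n` with no two consecutive elements, satisfying
conditions (1) and (2). -/
structure JumpPath (n : ℕ) where
  /-- number of vertices -/
  m : ℕ
  /-- edge relation, on increasing triples of `{1,…,m}` -/
  E : ℕ → ℕ → ℕ → Prop
  /-- the jump set -/
  J : Finset ℕ
  three_le : 3 ≤ m
  edges_ordered : ∀ a b d, E a b d → 1 ≤ a ∧ a < b ∧ b < d ∧ d ≤ m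
  consec : ∀ i, 1 ≤ i → i + 2 ≤ m → E i (i + 1) (i + 2)
  jumps_subset : J ⊆ Finset.Icc 2 (m - 1)
  jumps_card : J.card = n
  jumps_nonconsec : ∀ v ∈ J, v + 1 ∉ J
  cond1a : ∀ v ∈ J, 3 ≤ v → E (v - 2) (v - 1) (v + 1)
  cond1b : ∀ v ∈ J, v + 2 ≤ m → E (v - 1) (v + 1) (v + 2)
  cond2 : ∀ v, v - 1 ∈ J → v + 1 ∈ J → E (v - 2) v (v + 2)

/-- The edge relation of the hypergraph `Iₙ` on vertex set `{1,…,2n+1}`. -/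
def edgeI (n : ℕ) (a b d : ℕ) : Prop :=
  (1 ≤ a ∧ b = a + 1 ∧ d = a + 2 ∧ d ≤ 2 * n + 1) ∨
  (∃ i, 1 ≤ i ∧ a = 2 * i - 1 ∧ b = 2 * i + 1 ∧ d = 2 * i + 2 ∧ d ≤ 2 * n + 1) ∨
  (∃ i, 1 ≤ i ∧ a = 2 * i ∧ b = 2 * i + 1 ∧ d = 2 * i + 3 ∧ d ≤ 2 * n + 1) ∨
  (∃ i, 1 ≤ i ∧ a = 2 * i - 1 ∧ b = 2 * i + 1 ∧ d = 2 * i + 3 ∧ d ≤ 2 * n + 1)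

/-- The edge relation of the `t`-th power path `Pᵗₘ` on vertex set `{1,…,m}`:
all increasing triples spanning at most `t` consecutive vertices. -/
def edgePow (t m : ℕ) (a b d : ℕ) : Prop :=
  1 ≤ a ∧ a < b ∧ b < d ∧ d ≤ m ∧ d - a ≤ t - 1

/-- The edge relation of the ordered graph `G_H` associated with a monotone path with
jumps on `{1,…,m}` with jump set `J`: all consecutive pairs `(i, i+1)` together with
the pairs `(v-1, v+1)` for `v ∈ J`. -/
def GEdge (m : ℕ) (J : Finset ℕ) (a b : ℕ) : Prop :=
  (1 ≤ a ∧ b = a + 1 ∧ b ≤ m) ∨ (∃ v ∈ J, a = v - 1 ∧ b = v + 1)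

/-- `alphaFn N c u v` is `1` plus the number of edges of the longest red monotone path
inside `{1,…,N}` ending with the pair `(u, v)` (a path on `k` vertices has `k - 2`
edges, so this equals the largest `k - 1` over such paths; a pair `u < v` in
`{1,…,N}` is itself a path on two vertices with `0` edges). -/
noncomputable def alphaFn (N : ℕ) (c : ℕ → ℕ → ℕ → Bool) (u v : ℕ) : ℕ :=
  sSup {e : ℕ | ∃ k p, IsRedPath N k c p ∧ 2 ≤ k ∧ p (k - 1) = u ∧ p k = v ∧ e = k - 1}

/-- The Ramsey number `R(P_{n+2}, 𝒥ₙ)`: the least `N` such that every red-blue coloring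
of the triples of `{1,…,N}` contains a red monotone path on `n+2` vertices or a blue
copy of some member of `𝒥ₙ`. -/
noncomputable def RamseyPathJump (n : ℕ) : ℕ :=
  sInf {N | ∀ c : ℕ → ℕ → ℕ → Bool,
    HasRedPath N (n + 2) c ∨ ∃ H : JumpPath n, ∃ f, IsBlueCopy N H.m H.E c f}

/-- The Ramsey number `R(P_{n+2}, Iₙ)`. -/
noncomputable def RamseyPathI (n : ℕ) : ℕ :=
  sInf {N | ∀ c : ℕ → ℕ → ℕ → Bool,
    HasRedPath N (n + 2) c ∨ ∃ f, IsBlueCopy N (2 * n + 1) (edgeI n) c f}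

/-- The Ramsey number `R(P_{n+2}, Pᵗₘ)` for a power path. -/
noncomputable def RamseyPathPow (n t m : ℕ) : ℕ :=
  sInf {N | ∀ c : ℕ → ℕ → ℕ → Bool,
    HasRedPath N (n + 2) c ∨ ∃ f, IsBlueCopy N m (edgePow t m) c f}

lemma exists_fiber (n M : ℕ) (hn : 1 ≤ n) (F : Fin n → ℕ) (hsum : n * M ≤ ∑ i, F i) :
    ∃ i, M ≤ F i := by
  rcases Nat.eq_zero_or_pos M with rfl | hM
  · exact ⟨⟨0, hn⟩, Nat.zero_le _⟩
  by_contra h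
  push_neg at h
  have h1 : ∑ i, F i ≤ ∑ _i : Fin n, (M-1) :=
    Finset.sum_le_sum (fun i _ => by have := h i; omega)
  simp only [Finset.sum_const, Finset.card_univ, Fintype.card_fin, smul_eq_mul] at h1
  have h2 : n * (M-1) + n * 1 = n * M := by rw [← Nat.mul_add]; congr 1; omega
  omega

lemma chain_lemma (n : ℕ) (hn : 1 ≤ n) (k : ℕ) : ∃ N : ℕ, ∀ (χ : ℕ → ℕ → Fin n) (S : Finset ℕ),
    N ≤ S.card → ∃ (T : Finset ℕ) (g : ℕ → Fin n), T ⊆ S ∧ T.card = k ∧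
      ∀ u ∈ T, ∀ v ∈ T, u < v → χ u v = g u := by
  induction k with
  | zero => exact ⟨0, fun χ S _ => ⟨∅, fun _ => ⟨0, hn⟩, by simp⟩⟩
  | succ k ih =>
    obtain ⟨N, hN⟩ := ih
    refine ⟨n * N + 1, fun χ S hS => ?_⟩
    have hSne : S.Nonempty := Finset.card_pos.mp (by omega)
    set u := S.min' hSne with hu
    have huS : u ∈ S := S.min'_mem hSne
    have hS'c : n * N ≤ (S.erase u).card := by
      rw [Finset.card_erase_of_mem huS]; omega
    have hfib : ∃ i : Fin n, N ≤ ((S.erase u).filter (fun v => χ u v = i)).card := by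
      apply exists_fiber n N hn
      have hsum : (S.erase u).card = ∑ i : Fin n, ((S.erase u).filter (fun v => χ u v = i)).card :=
        Finset.card_eq_sum_card_fiberwise (fun x _ => Finset.mem_univ (χ u x))
      omega
    obtain ⟨i, hi⟩ := hfib
    obtain ⟨T', g', hT'sub, hT'card, hT'p⟩ := hN χ _ hi
    have hT'S' : T' ⊆ S.erase u := hT'sub.trans (Finset.filter_subset _ _)
    have huT' : u ∉ T' := fun h => (Finset.mem_erase.mp (hT'S' h)).1 rfl
    refine ⟨insert u T', fun w => if w = u then i else g' w, ?_, ?_, ?_⟩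
    · intro x hx
      rcases Finset.mem_insert.mp hx with rfl | hx
      · exact huS
      · exact (S.erase_subset u) (hT'S' hx)
    · rw [Finset.card_insert_of_notMem huT', hT'card]
    · intro x hx y hy hxy
      have hyu : y ≠ u := by
        rintro rfl
        rcases Finset.mem_insert.mp hx with rfl | hx
        · omega
        · exact absurd (S.min'_le x ((S.erase_subset u) (hT'S' hx))) (by omega)
      have hyT' : y ∈ T' := by
        rcases Finset.mem_insert.mp hy with rfl | h
        · exact absurd rfl hyu
        · exact h
      rcases Finset.mem_insert.mp hx with rfl | hx
      · simp only [if_pos rfl]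
        exact (Finset.mem_filter.mp (hT'sub hyT')).2
      · have hxu : x ≠ u := fun h => huT' (h ▸ hx)
        simp only [if_neg hxu]
        exact hT'p x hx y hyT' hxy

lemma ramsey_clique (n t : ℕ) (hn : 1 ≤ n) :
    ∃ N : ℕ, 1 ≤ N ∧ ∀ χ : ℕ → ℕ → Fin n, HasMonoClique N t n χ := by
  obtain ⟨N, hN⟩ := chain_lemma n hn (n * t)
  refine ⟨N + 1, by omega, fun χ => ?_⟩
  obtain ⟨T, g, hTsub, hTcard, hTp⟩ := hN χ (Finset.Icc 1 (N+1)) (by simp)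
  have hfib : ∃ i : Fin n, t ≤ (T.filter (fun v => g v = i)).card := by
    apply exists_fiber n t hn
    have hsum : T.card = ∑ i : Fin n, (T.filter (fun v => g v = i)).card :=
      Finset.card_eq_sum_card_fiberwise (fun x _ => Finset.mem_univ (g x))
    omega
  obtain ⟨i, hi⟩ := hfib
  obtain ⟨U, hUsub, hUcard⟩ := Finset.exists_subset_card_eq hi
  refine ⟨U, ?_, hUcard, i, ?_⟩
  · exact (hUsub.trans (Finset.filter_subset _ _)).trans hTsub
  · intro x hx y hy hxy
    have hxT := hUsub hx
    have := hTp x (Finset.mem_filter.mp hxT).1 y (Finset.mem_filter.mp (hUsub hy)).1 hxy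
    rw [this, (Finset.mem_filter.mp hxT).2]

/-- The triple coloring induced by a pair coloring: red iff the color decreases. -/
def cOf {n : ℕ} (χ : ℕ → ℕ → Fin n) : ℕ → ℕ → ℕ → Bool :=
  fun u v w => decide (χ v w < χ u v)

lemma noRed {n N : ℕ} (χ : ℕ → ℕ → Fin n) : ¬ HasRedPath N (n+2) (cOf χ) := by
  rintro ⟨p, _, _, hred⟩
  have step : ∀ i, 1 ≤ i → i ≤ n → (χ (p (i+1)) (p (i+2))).val < (χ (p i) (p (i+1))).val := by
    intro i h1 h2
    have := hred i h1 (by omega)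
    simp only [cOf, decide_eq_true_eq] at this
    exact this
  have key : ∀ j, j ≤ n → j ≤ (χ (p (n+1-j)) (p (n+2-j))).val := by
    intro j
    induction j with
    | zero => omega
    | succ j ih =>
      intro hj
      have h1 := ih (by omega)
      have e1 : n + 1 - j = (n - j) + 1 := by omega
      have e2 : n + 2 - j = (n - j) + 2 := by omega
      have e3 : n + 1 - (j+1) = n - j := by omega
      have e4 : n + 2 - (j+1) = (n - j) + 1 := by omega
      have := step (n - j) (by omega) (by omega)
      rw [e1, e2] at h1
      rw [e3, e4]
      omega
  have := key n le_rfl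
  have hlt := (χ (p (n+1-n)) (p (n+2-n))).isLt
  omega

/-- value of the `i`-th consecutive pair color along `f` -/
def dOf {n : ℕ} (χ : ℕ → ℕ → Fin n) (f : ℕ → ℕ) (i : ℕ) : ℕ := (χ (f i) (f (i+1))).val

/-- value of the skip pair color at a jump `v` -/
def bOf {n : ℕ} (χ : ℕ → ℕ → Fin n) (f : ℕ → ℕ) (v : ℕ) : ℕ := (χ (f (v-1)) (f (v+1))).val

lemma noBlue {n N : ℕ} (hn : 1 ≤ n) (χ : ℕ → ℕ → Fin n)
    (hχ : ¬ HasMonoTriangle N n χ) (H : JumpPath n) (f : ℕ → ℕ) :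
    ¬ IsBlueCopy N H.m H.E (cOf χ) f := by
  rintro ⟨hbd, hfmono, hblue⟩
  obtain ⟨m, E, J, h3, hord, hconsec, hJsub, hJcard, hJnc, h1a, h1b, h2⟩ := H
  simp only at hbd hfmono hblue
  have hblue' : ∀ a c e, E a c e → (χ (f a) (f c)).val ≤ (χ (f c) (f e)).val := by
    intro a c e h
    have hb := hblue a c e h
    simp only [cOf, decide_eq_false_iff_not, not_lt, Fin.le_def] at hb
    exact hb
  have hstep : ∀ i, 1 ≤ i → i + 2 ≤ m → dOf χ f i ≤ dOf χ f (i+1) :=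
    fun i h1 h2' => hblue' i (i+1) (i+2) (hconsec i h1 h2')
  have hmono' : ∀ i j, 1 ≤ i → i ≤ j → j + 1 ≤ m → dOf χ f i ≤ dOf χ f j := by
    intro i j h1 hij
    induction j, hij using Nat.le_induction with
    | base => intro _; exact le_rfl
    | succ j hij ih =>
      intro hj
      exact le_trans (ih (by omega)) (hstep j (by omega) (by omega))
  have hne : ∀ v, 2 ≤ v → v + 1 ≤ m → dOf χ f (v-1) = dOf χ f v → bOf χ f v ≠ dOf χ f v := by
    intro v h2v hv1 heq hbe
    apply hχ
    have e : v - 1 + 1 = v := by omega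
    refine ⟨f (v-1), f v, f (v+1),
      (hbd (v-1) (by omega) (by omega)).1,
      hfmono (v-1) v (by omega) (by omega) (by omega),
      hfmono v (v+1) (by omega) (by omega) (by omega),
      (hbd (v+1) (by omega) hv1).2, ?_, ?_⟩
    · apply Fin.val_injective
      unfold dOf at heq
      rw [e] at heq
      exact heq
    · apply Fin.val_injective
      unfold dOf at heq
      unfold bOf dOf at hbe
      rw [e] at heq
      omega
  have main : ∀ v, v ∈ J → (J.filter (· ≤ v)).card ≤ max (dOf χ f v) (bOf χ f v) := by
    intro v
    induction v using Nat.strong_induction_on with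
    | _ v ih =>
    intro hvJ
    obtain ⟨hv2, hvm⟩ := Finset.mem_Icc.mp (hJsub hvJ)
    have hv1m : v + 1 ≤ m := by omega
    have ha12 : dOf χ f (v-1) ≤ dOf χ f v := by
      have hs := hstep (v-1) (by omega) (by omega)
      have e : v - 1 + 1 = v := by omega
      rwa [e] at hs
    by_cases hP : ∃ w ∈ J, w < v
    · obtain ⟨w0, hw0J, hw0v⟩ := hP
      have hPne : (J.filter (· < v)).Nonempty := ⟨w0, Finset.mem_filter.mpr ⟨hw0J, hw0v⟩⟩
      set v₀ := (J.filter (· < v)).max' hPne with hv₀def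
      have hv₀ : v₀ ∈ J ∧ v₀ < v := Finset.mem_filter.mp ((J.filter (· < v)).max'_mem hPne)
      have hmax0 : ∀ w ∈ J, w < v → w ≤ v₀ := fun w hw hwv =>
        Finset.le_max' (J.filter (· < v)) w (Finset.mem_filter.mpr ⟨hw, hwv⟩)
      have hnc : v₀ + 2 ≤ v := by
        by_contra hc
        have hv01 : v = v₀ + 1 := by omega
        exact hJnc v₀ hv₀.1 (hv01 ▸ hvJ)
      obtain ⟨hv₀2, hv₀m⟩ := Finset.mem_Icc.mp (hJsub hv₀.1)
      have IH := ih v₀ hv₀.2 hv₀.1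
      have hcard : (J.filter (· ≤ v)).card ≤ (J.filter (· ≤ v₀)).card + 1 := by
        have hsub : J.filter (· ≤ v) ⊆ insert v (J.filter (· ≤ v₀)) := by
          intro x hx
          simp only [Finset.mem_filter, Finset.mem_insert] at hx ⊢
          rcases eq_or_lt_of_le hx.2 with h | h
          · exact Or.inl h
          · exact Or.inr ⟨hx.1, hmax0 x hx.1 h⟩
        exact le_trans (Finset.card_le_card hsub) (Finset.card_insert_le _ _)
      have fact1 : bOf χ f v₀ ≤ dOf χ f (v₀+1) :=
        hblue' (v₀-1) (v₀+1) (v₀+2) (h1b v₀ hv₀.1 (by omega))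
      have fact2 : dOf χ f v₀ ≤ dOf χ f (v-1) := hmono' v₀ (v-1) (by omega) (by omega) (by omega)
      have fact3 : bOf χ f v₀ ≤ dOf χ f (v-1) :=
        le_trans fact1 (hmono' (v₀+1) (v-1) (by omega) (by omega) (by omega))
      suffices hstep2 : max (dOf χ f v₀) (bOf χ f v₀) + 1 ≤ max (dOf χ f v) (bOf χ f v) by
        exact le_trans hcard (le_trans (Nat.add_le_add_right IH 1) hstep2)
      have hm0 : max (dOf χ f v₀) (bOf χ f v₀) ≤ dOf χ f (v-1) := max_le fact2 fact3
      rcases eq_or_lt_of_le ha12 with heq | hlt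
      · have hbne := hne v hv2 hv1m heq
        rcases Nat.lt_or_ge (dOf χ f v) (bOf χ f v) with hgt | hle
        · exact le_trans (by omega) (le_max_right (dOf χ f v) (bOf χ f v))
        · have hblt : bOf χ f v < dOf χ f v := lt_of_le_of_ne hle hbne
          have h3v : 3 ≤ v := by omega
          have fact4 : dOf χ f (v-2) ≤ bOf χ f v := by
            have hb := hblue' (v-2) (v-1) (v+1) (h1a v hvJ h3v)
            have e : v - 2 + 1 = v - 1 := by omega
            unfold dOf bOf
            rw [e]
            exact hb
          have fact5 : dOf χ f v₀ ≤ dOf χ f (v-2) := hmono' v₀ (v-2) (by omega) (by omega) (by omega)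
          have fact6 : bOf χ f v₀ ≤ bOf χ f v := by
            rcases eq_or_lt_of_le hnc with he | hlt2
            · have hj1 : (v-1) - 1 ∈ J := by
                have e : v - 1 - 1 = v₀ := by omega
                rw [e]; exact hv₀.1
              have hj2 : (v-1) + 1 ∈ J := by
                have e : v - 1 + 1 = v := by omega
                rw [e]; exact hvJ
              have hb := hblue' (v-1-2) (v-1) (v-1+2) (h2 (v-1) hj1 hj2)
              have e1 : v - 1 - 2 = v₀ - 1 := by omega
              have e2 : v - 1 + 2 = v + 1 := by omega
              have e3 : v₀ + 1 = v - 1 := by omega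
              unfold bOf
              rw [e1, e2] at hb
              rw [e3]
              exact hb
            · exact le_trans fact1
                (le_trans (hmono' (v₀+1) (v-2) (by omega) (by omega) (by omega)) fact4)
          refine le_trans ?_ (le_max_left (dOf χ f v) (bOf χ f v))
          have hmb : max (dOf χ f v₀) (bOf χ f v₀) ≤ bOf χ f v := max_le (le_trans fact5 fact4) fact6
          omega
      · refine le_trans ?_ (le_max_left (dOf χ f v) (bOf χ f v))
        omega
    · push_neg at hP
      have hcard : (J.filter (· ≤ v)).card ≤ 1 := by
        have hsub : J.filter (· ≤ v) ⊆ {v} := by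
          intro x hx
          simp only [Finset.mem_filter] at hx
          have := hP x hx.1
          simp only [Finset.mem_singleton]
          omega
        simpa using Finset.card_le_card hsub
      rcases eq_or_lt_of_le ha12 with heq | hlt
      · have hbne := hne v hv2 hv1m heq
        rcases Nat.lt_trichotomy (bOf χ f v) (dOf χ f v) with h | h | h
        · exact le_trans (by omega) (le_trans (by omega : 1 ≤ dOf χ f v)
            (le_max_left (dOf χ f v) (bOf χ f v)))
        · exact absurd h hbne
        · exact le_trans (by omega) (le_trans (by omega : 1 ≤ bOf χ f v)
            (le_max_right (dOf χ f v) (bOf χ f v)))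
      · exact le_trans hcard (le_trans (by omega : 1 ≤ dOf χ f v)
          (le_max_left (dOf χ f v) (bOf χ f v)))
  have hJne : J.Nonempty := by
    rw [← Finset.card_pos, hJcard]; omega
  have hva : J.max' hJne ∈ J := J.max'_mem hJne
  have hfull : J.filter (· ≤ J.max' hJne) = J :=
    Finset.filter_true_of_mem (fun x hx => J.le_max' x hx)
  have hmain := main (J.max' hJne) hva
  rw [hfull, hJcard] at hmain
  have hd : dOf χ f (J.max' hJne) < n := (χ _ _).isLt
  have hb : bOf χ f (J.max' hJne) < n := (χ _ _).isLt
  have : max (dOf χ f (J.max' hJne)) (bOf χ f (J.max' hJne)) < n := max_lt hd hb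
  omega

lemma alphaSet_one_mem {N : ℕ} (c : ℕ → ℕ → ℕ → Bool) {u v : ℕ}
    (hu : 1 ≤ u) (huv : u < v) (hv : v ≤ N) :
    1 ∈ {e : ℕ | ∃ k p, IsRedPath N k c p ∧ 2 ≤ k ∧ p (k - 1) = u ∧ p k = v ∧ e = k - 1} := by
  refine ⟨2, fun i => if i ≤ 1 then u else v, ⟨?_, ?_, ?_⟩, le_rfl, ?_, ?_, rfl⟩
  · intro i h1 h2
    rcases le_or_gt i 1 with h | h
    · simp only [if_pos h]; omega
    · simp only [if_neg (by omega : ¬ i ≤ 1)]; omega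
  · intro i j h1 hij hj
    have : i = 1 ∧ j = 2 := by omega
    simp only [this.1, this.2]
    simpa using huv
  · intro i h1 h2
    omega
  · simp
  · simp

lemma alphaSet_bdd {N n : ℕ} (c : ℕ → ℕ → ℕ → Bool) (hnored : ¬ HasRedPath N (n+2) c)
    (u v : ℕ) : ∀ e ∈ {e : ℕ | ∃ k p, IsRedPath N k c p ∧ 2 ≤ k ∧ p (k - 1) = u ∧ p k = v ∧ e = k - 1},
      e ≤ n := by
  rintro e ⟨k, p, hp, h2k, _, _, rfl⟩
  by_contra h
  have hk : n + 2 ≤ k := by omega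
  apply hnored
  exact ⟨p, fun i h1 h2 => hp.1 i h1 (by omega),
    fun i j h1 hij hj => hp.2.1 i j h1 hij (by omega),
    fun i h1 h2 => hp.2.2 i h1 (by omega)⟩

lemma alpha_bounds {N n : ℕ} (c : ℕ → ℕ → ℕ → Bool) (hnored : ¬ HasRedPath N (n+2) c)
    {u v : ℕ} (hu : 1 ≤ u) (huv : u < v) (hv : v ≤ N) :
    1 ≤ alphaFn N c u v ∧ alphaFn N c u v ≤ n := by
  constructor
  · exact le_csSup ⟨n, fun e he => alphaSet_bdd c hnored u v e he⟩
      (alphaSet_one_mem c hu huv hv)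
  · exact csSup_le ⟨1, alphaSet_one_mem c hu huv hv⟩ (alphaSet_bdd c hnored u v)

lemma alpha_red_step {N n : ℕ} (c : ℕ → ℕ → ℕ → Bool) (hnored : ¬ HasRedPath N (n+2) c)
    {u v w : ℕ} (hu : 1 ≤ u) (huv : u < v) (hvw : v < w) (hw : w ≤ N)
    (hc : c u v w = true) : alphaFn N c u v + 1 ≤ alphaFn N c v w := by
  have hmem : alphaFn N c u v ∈ {e : ℕ | ∃ k p, IsRedPath N k c p ∧ 2 ≤ k ∧
      p (k - 1) = u ∧ p k = v ∧ e = k - 1} :=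
    Nat.sSup_mem ⟨1, alphaSet_one_mem c hu huv (by omega)⟩
      ⟨n, fun e he => alphaSet_bdd c hnored u v e he⟩
  obtain ⟨k, p, hp, h2k, hpk1, hpk, he⟩ := hmem
  have hpub : ∀ i, 1 ≤ i → i ≤ k → p i ≤ v := by
    intro i h1 h2
    rcases Nat.lt_or_ge i k with h | h
    · have := hp.2.1 i k h1 h (le_refl k)
      omega
    · have hik : i = k := by omega
      rw [hik, hpk]
  have hp' : IsRedPath N (k+1) c (fun i => if i ≤ k then p i else w) := by
    refine ⟨?_, ?_, ?_⟩
    · intro i h1 h2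
      rcases le_or_gt i k with h | h
      · simp only [if_pos h]; exact hp.1 i h1 h
      · simp only [if_neg (by omega : ¬ i ≤ k)]; omega
    · intro i j h1 hij hj
      rcases le_or_gt j k with h | h
      · simp only [if_pos h, if_pos (by omega : i ≤ k)]
        exact hp.2.1 i j h1 hij h
      · have hik : i ≤ k := by omega
        simp only [if_pos hik, if_neg (by omega : ¬ j ≤ k)]
        have := hpub i h1 hik
        omega
    · intro i h1 h2
      rcases le_or_gt (i+2) k with h | h
      · simp only [if_pos h, if_pos (by omega : i ≤ k), if_pos (by omega : i + 1 ≤ k)]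
        exact hp.2.2 i h1 h
      · have hik : i = k - 1 := by omega
        have h1k : i + 1 = k := by omega
        simp only [if_pos (by omega : i ≤ k), if_pos (by omega : i + 1 ≤ k),
          if_neg (by omega : ¬ i + 2 ≤ k)]
        have e1 : k - 1 + 1 = k := by omega
        rw [hik, e1, hpk1, hpk]
        exact hc
  have hmem2 : k ∈ {e : ℕ | ∃ k' p', IsRedPath N k' c p' ∧ 2 ≤ k' ∧
      p' (k' - 1) = v ∧ p' k' = w ∧ e = k' - 1} := by
    refine ⟨k+1, fun i => if i ≤ k then p i else w, hp', by omega, ?_, ?_, by omega⟩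
    · simp only [Nat.add_sub_cancel, if_pos (le_refl k)]
      exact hpk
    · simp only [if_neg (by omega : ¬ k + 1 ≤ k)]
  have hle : k ≤ alphaFn N c v w :=
    le_csSup ⟨n, fun e he => alphaSet_bdd c hnored v w e he⟩ hmem2
  omega

lemma exists_good_N (n : ℕ) (hn : 1 ≤ n) :
    ∃ N, ∀ c : ℕ → ℕ → ℕ → Bool,
      HasRedPath N (n + 2) c ∨ ∃ H : JumpPath n, ∃ f, IsBlueCopy N H.m H.E c f := by
  obtain ⟨N, _, hN⟩ := ramsey_clique n (2*n+1) hn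
  refine ⟨N, fun c => ?_⟩
  by_cases hred : HasRedPath N (n+2) c
  · exact Or.inl hred
  right
  set χ : ℕ → ℕ → Fin n := fun u v => ⟨(alphaFn N c u v - 1) % n, Nat.mod_lt _ hn⟩ with hχdef
  obtain ⟨S, hSsub, hScard, k₀, hSmono⟩ := hN χ
  have hM : 0 < 2*n+1 := by omega
  refine ⟨⟨2*n+1, fun a b d => 1 ≤ a ∧ a < b ∧ b < d ∧ d ≤ 2*n+1,
      (Finset.Icc 1 n).image (2 * ·), by omega, fun a b d h => h,
      fun i h1 h2 => ⟨h1, by omega, by omega, h2⟩, ?_, ?_, ?_, ?_, ?_, ?_⟩,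
    fun i => (S.orderEmbOfFin hScard) ⟨(i-1) % (2*n+1), Nat.mod_lt _ hM⟩, ?_, ?_, ?_⟩
  · intro x hx
    obtain ⟨i, hi, rfl⟩ := Finset.mem_image.mp hx
    obtain ⟨hi1, hi2⟩ := Finset.mem_Icc.mp hi
    simp only [Finset.mem_Icc]
    omega
  · rw [Finset.card_image_of_injective _ (fun a b h => by omega), Nat.card_Icc]
    omega
  · intro v hv hv1
    obtain ⟨i, _, rfl⟩ := Finset.mem_image.mp hv
    obtain ⟨j, _, hj⟩ := Finset.mem_image.mp hv1
    omega
  · intro v hv h3v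
    obtain ⟨i, hi, rfl⟩ := Finset.mem_image.mp hv
    obtain ⟨hi1, hi2⟩ := Finset.mem_Icc.mp hi
    refine ⟨by omega, by omega, by omega, by omega⟩
  · intro v hv hv2
    obtain ⟨i, hi, rfl⟩ := Finset.mem_image.mp hv
    obtain ⟨hi1, hi2⟩ := Finset.mem_Icc.mp hi
    refine ⟨by omega, by omega, by omega, by omega⟩
  · intro v hv1 hv2
    obtain ⟨i, hi, hiv⟩ := Finset.mem_image.mp hv1
    obtain ⟨j, hj, hjv⟩ := Finset.mem_image.mp hv2
    obtain ⟨hi1, hi2⟩ := Finset.mem_Icc.mp hi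
    obtain ⟨hj1, hj2⟩ := Finset.mem_Icc.mp hj
    refine ⟨by omega, by omega, by omega, by omega⟩
  · intro i h1 h2
    dsimp only
    have h2' : i ≤ 2*n+1 := h2
    have hmem : (S.orderEmbOfFin hScard) ⟨(i-1) % (2*n+1), Nat.mod_lt _ hM⟩ ∈ S :=
      Finset.orderEmbOfFin_mem S hScard _
    have := Finset.mem_Icc.mp (hSsub hmem)
    omega
  · intro i j h1 hij hj
    dsimp only
    have hj' : j ≤ 2*n+1 := hj
    apply (S.orderEmbOfFin hScard).strictMono
    simp only [Fin.mk_lt_mk]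
    rw [Nat.mod_eq_of_lt (by omega), Nat.mod_eq_of_lt (by omega)]
    omega
  · rintro a b d ⟨h1, hab, hbd, hdm⟩
    dsimp only
    have hdm' : d ≤ 2*n+1 := hdm
    set fa := (S.orderEmbOfFin hScard) ⟨(a-1) % (2*n+1), Nat.mod_lt _ hM⟩ with hfa
    set fb := (S.orderEmbOfFin hScard) ⟨(b-1) % (2*n+1), Nat.mod_lt _ hM⟩ with hfb
    set fd := (S.orderEmbOfFin hScard) ⟨(d-1) % (2*n+1), Nat.mod_lt _ hM⟩ with hfd
    have hfaS : fa ∈ S := Finset.orderEmbOfFin_mem S hScard _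
    have hfbS : fb ∈ S := Finset.orderEmbOfFin_mem S hScard _
    have hfdS : fd ∈ S := Finset.orderEmbOfFin_mem S hScard _
    have hab' : fa < fb := by
      apply (S.orderEmbOfFin hScard).strictMono
      simp only [Fin.mk_lt_mk]
      rw [Nat.mod_eq_of_lt (by omega), Nat.mod_eq_of_lt (by omega)]
      omega
    have hbd' : fb < fd := by
      apply (S.orderEmbOfFin hScard).strictMono
      simp only [Fin.mk_lt_mk]
      rw [Nat.mod_eq_of_lt (by omega), Nat.mod_eq_of_lt (by omega)]
      omega
    obtain ⟨hfa1, hfaN⟩ := Finset.mem_Icc.mp (hSsub hfaS)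
    obtain ⟨hfb1, hfbN⟩ := Finset.mem_Icc.mp (hSsub hfbS)
    obtain ⟨hfd1, hfdN⟩ := Finset.mem_Icc.mp (hSsub hfdS)
    have hχ1 : χ fa fb = k₀ := hSmono fa hfaS fb hfbS hab'
    have hχ2 : χ fb fd = k₀ := hSmono fb hfbS fd hfdS hbd'
    have hv1 := alpha_bounds c hred hfa1 hab' hfbN
    have hv2 := alpha_bounds c hred hfb1 hbd' hfdN
    have hvals : (alphaFn N c fa fb - 1) % n = (alphaFn N c fb fd - 1) % n := by
      have := congrArg Fin.val (hχ1.trans hχ2.symm)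
      exact this
    rw [Nat.mod_eq_of_lt (by omega), Nat.mod_eq_of_lt (by omega)] at hvals
    by_contra hcne
    have hct : c fa fb fd = true := by
      cases hcc : c fa fb fd
      · exact absurd hcc hcne
      · rfl
    have := alpha_red_step c hred hfa1 hab' hbd' hfdN hct
    omega

/-- For every positive integer `n`, there is a red-blue coloring of the
triples of `{1,…,r(3;n)-1}` with no red monotone path on `n+2` vertices and no blue copy
of any member of `𝒥ₙ`; consequently `r(3;n) ≤ R(P_{n+2}, 𝒥ₙ)`. -/
theorem lowerBound_family (n : ℕ) (hn : 1 ≤ n) :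
    (∃ c : ℕ → ℕ → ℕ → Bool,
      ¬ HasRedPath (r3 n - 1) (n + 2) c ∧
      ∀ H : JumpPath n, ∀ f : ℕ → ℕ, ¬ IsBlueCopy (r3 n - 1) H.m H.E c f) ∧
    r3 n ≤ RamseyPathJump n := by
  have hex : ∃ χ : ℕ → ℕ → Fin n, ¬ HasMonoTriangle (r3 n - 1) n χ := by
    by_contra h
    push_neg at h
    have hmem : (r3 n - 1) ∈ {N | ∀ χ : ℕ → ℕ → Fin n, HasMonoTriangle N n χ} := h
    have hle : r3 n ≤ r3 n - 1 := Nat.sInf_le hmem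
    have h0 : r3 n = 0 := by omega
    obtain ⟨u, v, w, h1, h2, h3, h4, _, _⟩ := h (fun _ _ => ⟨0, hn⟩)
    rw [h0] at h4
    omega
  obtain ⟨χ, hχ⟩ := hex
  constructor
  · exact ⟨cOf χ, noRed χ, fun H f => noBlue hn χ hχ H f⟩
  · obtain ⟨N, hNT⟩ := exists_good_N n hn
    have hTne : {N | ∀ c : ℕ → ℕ → ℕ → Bool,
        HasRedPath N (n + 2) c ∨ ∃ H : JumpPath n, ∃ f, IsBlueCopy N H.m H.E c f}.Nonempty :=
      ⟨N, hNT⟩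
    have hmem : ∀ c : ℕ → ℕ → ℕ → Bool,
        HasRedPath (RamseyPathJump n) (n + 2) c ∨
          ∃ H : JumpPath n, ∃ f, IsBlueCopy (RamseyPathJump n) H.m H.E c f :=
      Nat.sInf_mem hTne
    apply Nat.sInf_le
    show ∀ χ' : ℕ → ℕ → Fin n, HasMonoTriangle (RamseyPathJump n) n χ'
    intro χ'
    by_contra hχ'
    rcases hmem (cOf χ') with hred | ⟨H, f, hblue⟩
    · exact noRed χ' hred
    · exact noBlue hn χ' hχ' H f hblue
end

section
/- For every positive integer n and every N ≥ 4^n · r(3;n), every red-blue coloring of the triples of {1,…,N} contains a red monotone path on n+2 vertices or a blue copy of the hypergraph I_n. Consequently R(P_{n+2}, 𝒥_n) ≤ 4^n · r(3;n). -/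
open scoped Classical

/-- `e = k - 1` for some red monotone path on `k ≥ 2` vertices ending in `(u,v)`. -/
def redPred (N : ℕ) (c : ℕ → ℕ → ℕ → Bool) (u v : ℕ) (e : ℕ) : Prop :=
  ∃ k p, IsRedPath N k c p ∧ 2 ≤ k ∧ p (k - 1) = u ∧ p k = v ∧ e = k - 1

/-- One plus the number of edges of a longest red monotone path ending in `(u,v)`,
capped at `n`. -/
noncomputable def redPot (N n : ℕ) (c : ℕ → ℕ → ℕ → Bool) (u v : ℕ) : ℕ :=
  Nat.findGreatest (redPred N c u v) n

lemma redPot_le (N n : ℕ) (c : ℕ → ℕ → ℕ → Bool) (u v : ℕ) : redPot N n c u v ≤ n := by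
  unfold redPot; exact Nat.findGreatest_le n

lemma redPred_pair {N : ℕ} {c : ℕ → ℕ → ℕ → Bool} {u v : ℕ}
    (h1 : 1 ≤ u) (h2 : u < v) (h3 : v ≤ N) : redPred N c u v 1 := by
  refine ⟨2, fun i => if i ≤ 1 then u else v, ⟨?_, ?_, ?_⟩, le_refl 2, ?_, ?_, rfl⟩
  · intro i hi1 hi2
    by_cases h : i ≤ 1 <;> simp [h] <;> omega
  · intro i j hi hij hj
    have hi1 : i = 1 := by omega
    have hj2 : j = 2 := by omega
    subst hi1; subst hj2; simp [h2]
  · intro i hi1 hi2; omega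
  · simp
  · simp

lemma one_le_redPot {N n : ℕ} {c : ℕ → ℕ → ℕ → Bool} {u v : ℕ}
    (hn : 1 ≤ n) (h1 : 1 ≤ u) (h2 : u < v) (h3 : v ≤ N) :
    1 ≤ redPot N n c u v := by
  unfold redPot; exact Nat.le_findGreatest hn (redPred_pair h1 h2 h3)

lemma redPot_step {N n : ℕ} {c : ℕ → ℕ → ℕ → Bool} {u v w : ℕ}
    (hn : 1 ≤ n) (hnr : ¬ HasRedPath N (n + 2) c)
    (h1 : 1 ≤ u) (h2 : u < v) (h3 : v < w) (h4 : w ≤ N)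
    (hred : c u v w = true) :
    redPot N n c u v + 1 ≤ n ∧ redPot N n c u v + 1 ≤ redPot N n c v w := by
  have hvN : v ≤ N := by omega
  have hP : redPred N c u v (redPot N n c u v) :=
    Nat.findGreatest_spec hn (redPred_pair h1 h2 hvN)
  obtain ⟨k, p, ⟨hb, hm, ht⟩, hk2, hku, hkv, he⟩ := hP
  have hkn : k - 1 ≤ n := he ▸ redPot_le N n c u v
  set p' : ℕ → ℕ := fun i => if i ≤ k then p i else w with hp'
  have hple : ∀ i, 1 ≤ i → i ≤ k → p i ≤ v := by
    intro i hi1 hik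
    rcases eq_or_lt_of_le hik with h | h
    · rw [h, hkv]
    · exact le_of_lt (hkv ▸ hm i k hi1 h (le_refl k))
  have hpath : IsRedPath N (k + 1) c p' := by
    refine ⟨?_, ?_, ?_⟩
    · intro i hi1 hik
      by_cases h : i ≤ k
      · simpa [hp', h] using hb i hi1 h
      · simp only [hp', if_neg h]; omega
    · intro i j hi1 hij hjk
      by_cases hj : j ≤ k
      · have hik : i ≤ k := by omega
        simp only [hp', if_pos hj, if_pos hik]
        exact hm i j hi1 hij hj
      · have hik : i ≤ k := by omega
        simp only [hp', if_pos hik, if_neg (by omega : ¬ j ≤ k)]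
        calc p i ≤ v := hple i hi1 hik
        _ < w := h3
    · intro i hi1 hik
      by_cases h : i + 2 ≤ k
      · have e1 : i ≤ k := by omega
        have e2 : i + 1 ≤ k := by omega
        simp only [hp', if_pos e1, if_pos e2, if_pos h]
        exact ht i hi1 h
      · have hik1 : i = k - 1 := by omega
        have e1 : i ≤ k := by omega
        have e2 : i + 1 = k := by omega
        simp only [hp', if_pos e1, if_pos (le_of_eq e2)]
        rw [if_neg (by omega : ¬ i + 2 ≤ k), e2, hkv, hik1, hku]
        exact hred
  have hk1n : k - 1 < n := by
    by_contra hcon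
    have hkeq : k = n + 1 := by omega
    apply hnr
    refine ⟨p', ?_⟩
    rw [(by omega : n + 2 = k + 1)]
    exact hpath
  constructor
  · omega
  · refine Nat.le_findGreatest (by omega) ⟨k + 1, p', hpath, by omega, ?_, ?_, by omega⟩
    · simp only [Nat.add_sub_cancel]
      simp only [hp', if_pos (le_refl k)]
      exact hkv
    · simp only [hp', if_neg (by omega : ¬ k + 1 ≤ k)]

lemma blue_of_pot_le {N n : ℕ} {c : ℕ → ℕ → ℕ → Bool} {u v w : ℕ}
    (hn : 1 ≤ n) (hnr : ¬ HasRedPath N (n + 2) c)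
    (h1 : 1 ≤ u) (h2 : u < v) (h3 : v < w) (h4 : w ≤ N)
    (hle : redPot N n c v w ≤ redPot N n c u v) :
    c u v w = false := by
  cases hc : c u v w
  · rfl
  · exfalso
    have := (redPot_step hn hnr h1 h2 h3 h4 hc).2
    omega
lemma edgeI_facts {n p q r : ℕ} (h : edgeI n p q r) :
    1 ≤ p ∧ p < q ∧ q < r ∧ r ≤ 2 * n + 1 ∧ 3 ≤ r := by
  rcases h with ⟨h1, h2, h3, h4⟩ | ⟨i, hi, ha, hb, hd, hle⟩ | ⟨i, hi, ha, hb, hd, hle⟩ |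
    ⟨i, hi, ha, hb, hd, hle⟩ <;> omega

/-- `QI v a j` : there is a partial blue copy of `Iₙ` on `2j+1` vertices ending at `v`,
whose last two interface pairs have red-potential at least `a`. -/
def QI (N n : ℕ) (c : ℕ → ℕ → ℕ → Bool) (v a j : ℕ) : Prop :=
  ∃ x : ℕ → ℕ, (∀ i, 1 ≤ i → i ≤ 2 * j + 1 → 1 ≤ x i ∧ x i ≤ N) ∧
    (∀ i i', 1 ≤ i → i < i' → i' ≤ 2 * j + 1 → x i < x i') ∧
    (∀ p q r, edgeI n p q r → r ≤ 2 * j + 1 → c (x p) (x q) (x r) = false) ∧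
    x (2 * j + 1) = v ∧
    (1 ≤ j → a ≤ redPot N n c (x (2 * j)) (x (2 * j + 1)) ∧
      a ≤ redPot N n c (x (2 * j - 1)) (x (2 * j + 1)))

lemma QI_zero {N n : ℕ} {c : ℕ → ℕ → ℕ → Bool} {v a : ℕ}
    (h1 : 1 ≤ v) (h2 : v ≤ N) : QI N n c v a 0 := by
  refine ⟨fun _ => v, ?_, ?_, ?_, rfl, by omega⟩
  · intro i _ _; exact ⟨h1, h2⟩
  · intro i i' hi hii hi'; omega
  · intro p q r he hr
    have := edgeI_facts he
    omega

lemma QI_ext {N n : ℕ} {c : ℕ → ℕ → ℕ → Bool} {u v w a j : ℕ}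
    (hn : 1 ≤ n) (hnr : ¬ HasRedPath N (n + 2) c)
    (hq : QI N n c u a j)
    (h2 : u < v) (h3 : v < w) (h4 : w ≤ N)
    (e1 : redPot N n c u v = a) (e2 : redPot N n c v w = a) (e3 : redPot N n c u w = a) :
    QI N n c w a (j + 1) := by
  obtain ⟨x, hb, hm, he, hxv, hint⟩ := hq
  have hu1 : 1 ≤ u := (hxv ▸ hb (2 * j + 1) (by omega) (by omega)).1
  have hvN : v ≤ N := by omega
  set x' : ℕ → ℕ := fun i => if i ≤ 2 * j + 1 then x i else if i = 2 * j + 2 then v else w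
    with hx'
  have hxle : ∀ i, 1 ≤ i → i ≤ 2 * j + 1 → x i ≤ u := by
    intro i hi1 hik
    rcases eq_or_lt_of_le hik with h | h
    · rw [h, hxv]
    · exact le_of_lt (hxv ▸ hm i (2 * j + 1) hi1 h (le_refl _))
  have hvx2 : x' (2 * j + 2) = v := by
    simp only [hx']
    rw [if_neg (by omega : ¬ 2 * j + 2 ≤ 2 * j + 1)]
    simp
  have hvx3 : x' (2 * j + 3) = w := by
    simp only [hx']
    rw [if_neg (by omega : ¬ 2 * j + 3 ≤ 2 * j + 1), if_neg (by omega : ¬ 2*j+3 = 2 * j + 2)]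
  have hxeq : ∀ i, i ≤ 2 * j + 1 → x' i = x i := by
    intro i hi; simp only [hx', if_pos hi]
  have hvx1 : x' (2 * j + 1) = u := by rw [hxeq _ (le_refl _)]; exact hxv
  refine ⟨x', ?_, ?_, ?_, ?_, ?_⟩
  · intro i hi1 hik
    by_cases h : i ≤ 2 * j + 1
    · rw [hxeq i h]; exact hb i hi1 h
    · by_cases h2' : i = 2 * j + 2
      · rw [h2', hvx2]; omega
      · have h3' : i = 2 * j + 3 := by omega
        rw [h3', hvx3]; omega
  · intro i i' hi1 hii hi'
    by_cases h : i' ≤ 2 * j + 1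
    · rw [hxeq i (by omega), hxeq i' h]
      exact hm i i' hi1 hii h
    · have hiu : i ≤ 2 * j + 1 → x' i < v := by
        intro hi
        rw [hxeq i hi]
        exact lt_of_le_of_lt (hxle i hi1 hi) h2
      by_cases h2' : i' = 2 * j + 2
      · rw [h2', hvx2]
        exact hiu (by omega)
      · have h3' : i' = 2 * j + 3 := by omega
        rw [h3', hvx3]
        by_cases hi : i ≤ 2 * j + 1
        · exact lt_trans (hiu hi) h3
        · have : i = 2 * j + 2 := by omega
          rw [this, hvx2]; exact h3
  · intro p q r hedge hr
    have hfacts := edgeI_facts hedge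
    by_cases hrold : r ≤ 2 * j + 1
    · rw [hxeq p (by omega), hxeq q (by omega), hxeq r (by omega)]
      exact he p q r hedge hrold
    · -- new edges
      rcases hedge with ⟨hp1, hq1, hr1, _⟩ | ⟨i, hi, hp1, hq1, hr1, _⟩ |
        ⟨i, hi, hp1, hq1, hr1, _⟩ | ⟨i, hi, hp1, hq1, hr1, _⟩
      · -- consecutive triple
        by_cases hcase : r = 2 * j + 2
        · -- (2j, 2j+1, 2j+2), needs j ≥ 1
          have hpj : p = 2 * j := by omega
          have hj1 : 1 ≤ j := by omega
          have hqj : q = 2 * j + 1 := by omega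
          rw [hpj, hqj, hcase, hxeq _ (by omega), hvx1, hvx2]
          have hx2j1 : 1 ≤ x (2 * j) := (hb (2 * j) (by omega) (by omega)).1
          have hx2ju : x (2 * j) < u := hxv ▸ hm (2 * j) (2 * j + 1) (by omega) (by omega) (le_refl _)
          refine blue_of_pot_le hn hnr hx2j1 hx2ju h2 hvN ?_
          rw [e1]
          exact (hxv ▸ (hint hj1).1)
        · -- (2j+1, 2j+2, 2j+3)
          have hrr : r = 2 * j + 3 := by omega
          have hpj : p = 2 * j + 1 := by omega
          have hqj : q = 2 * j + 2 := by omega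
          rw [hpj, hqj, hrr, hvx1, hvx2, hvx3]
          refine blue_of_pot_le hn hnr hu1 h2 h3 h4 ?_
          rw [e1, e2]
      · -- (2i-1, 2i+1, 2i+2) : r = 2i+2 = 2j+2, i = j ≥ 1
        have hij : i = j := by omega
        have hj1 : 1 ≤ j := by omega
        have hpj : p = 2 * j - 1 := by omega
        have hqj : q = 2 * j + 1 := by omega
        have hrr : r = 2 * j + 2 := by omega
        rw [hpj, hqj, hrr, hxeq _ (by omega), hvx1, hvx2]
        have hx1 : 1 ≤ x (2 * j - 1) := (hb _ (by omega) (by omega)).1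
        have hxu : x (2 * j - 1) < u := hxv ▸ hm (2 * j - 1) (2 * j + 1) (by omega) (by omega) (le_refl _)
        refine blue_of_pot_le hn hnr hx1 hxu h2 hvN ?_
        rw [e1]
        exact (hxv ▸ (hint hj1).2)
      · -- (2i, 2i+1, 2i+3) : r = 2i+3 = 2j+3, i = j ≥ 1
        have hij : i = j := by omega
        have hj1 : 1 ≤ j := by omega
        have hpj : p = 2 * j := by omega
        have hqj : q = 2 * j + 1 := by omega
        have hrr : r = 2 * j + 3 := by omega
        rw [hpj, hqj, hrr, hxeq _ (by omega), hvx1, hvx3]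
        have hx1 : 1 ≤ x (2 * j) := (hb _ (by omega) (by omega)).1
        have hxu : x (2 * j) < u := hxv ▸ hm (2 * j) (2 * j + 1) (by omega) (by omega) (le_refl _)
        refine blue_of_pot_le hn hnr hx1 hxu (by omega) h4 ?_
        rw [e3]
        exact (hxv ▸ (hint hj1).1)
      · -- (2i-1, 2i+1, 2i+3) : r = 2i+3 = 2j+3, i = j ≥ 1
        have hij : i = j := by omega
        have hj1 : 1 ≤ j := by omega
        have hpj : p = 2 * j - 1 := by omega
        have hqj : q = 2 * j + 1 := by omega
        have hrr : r = 2 * j + 3 := by omega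
        rw [hpj, hqj, hrr, hxeq _ (by omega), hvx1, hvx3]
        have hx1 : 1 ≤ x (2 * j - 1) := (hb _ (by omega) (by omega)).1
        have hxu : x (2 * j - 1) < u := hxv ▸ hm (2 * j - 1) (2 * j + 1) (by omega) (by omega) (le_refl _)
        refine blue_of_pot_le hn hnr hx1 hxu (by omega) h4 ?_
        rw [e3]
        exact (hxv ▸ (hint hj1).2)
  · rw [(by ring : 2 * (j + 1) + 1 = 2 * j + 3)]
    exact hvx3
  · intro _
    rw [(by ring : 2 * (j + 1) + 1 = 2 * j + 3), (by ring : 2 * (j + 1) = 2 * j + 2),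
      (by omega : 2 * j + 2 - 1 = 2 * j + 1), hvx1, hvx2, hvx3, e2, e3]
    exact ⟨le_refl a, le_refl a⟩

/-- The profile of a vertex: for each threshold `a`, the largest number of triangles of
a partial blue copy of `Iₙ` ending at `v` with interfaces of potential at least `a`. -/
noncomputable def gp (N n : ℕ) (c : ℕ → ℕ → ℕ → Bool) (v a : ℕ) : ℕ :=
  Nat.findGreatest (QI N n c v a) n

lemma gp_le (N n : ℕ) (c : ℕ → ℕ → ℕ → Bool) (v a : ℕ) : gp N n c v a ≤ n := by
  unfold gp; exact Nat.findGreatest_le n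

lemma QI_mono {N n : ℕ} {c : ℕ → ℕ → ℕ → Bool} {v a a' j : ℕ} (h : a ≤ a')
    (hq : QI N n c v a' j) : QI N n c v a j := by
  obtain ⟨x, hb, hm, he, hxv, hint⟩ := hq
  exact ⟨x, hb, hm, he, hxv, fun hj => ⟨le_trans h (hint hj).1, le_trans h (hint hj).2⟩⟩

lemma gp_spec {N n : ℕ} {c : ℕ → ℕ → ℕ → Bool} {v a : ℕ}
    (h1 : 1 ≤ v) (h2 : v ≤ N) : QI N n c v a (gp N n c v a) := by
  unfold gp
  exact Nat.findGreatest_spec (Nat.zero_le n) (QI_zero h1 h2)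

lemma gp_anti {N n : ℕ} {c : ℕ → ℕ → ℕ → Bool} {v a a' : ℕ}
    (h1 : 1 ≤ v) (h2 : v ≤ N) (h : a ≤ a') : gp N n c v a' ≤ gp N n c v a := by
  have hq : QI N n c v a (gp N n c v a') := QI_mono h (gp_spec h1 h2)
  unfold gp
  exact Nat.le_findGreatest (gp_le N n c v a') hq
lemma filter_card_of_anti {f : ℕ → ℕ} {k a : ℕ}
    (hf : ∀ a b, 1 ≤ a → a < b → b ≤ k → f b < f a) (ha1 : 1 ≤ a) (hak : a ≤ k) :
    (((Finset.Icc 1 k).image f).filter (fun y => f a ≤ y)).card = a := by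
  have himg : ((Finset.Icc 1 k).image f).filter (fun y => f a ≤ y)
      = (Finset.Icc 1 a).image f := by
    ext y
    simp only [Finset.mem_filter, Finset.mem_image, Finset.mem_Icc]
    constructor
    · rintro ⟨⟨b, ⟨hb1, hbk⟩, rfl⟩, hay⟩
      refine ⟨b, ⟨hb1, ?_⟩, rfl⟩
      by_contra hcon
      exact absurd hay (not_le.mpr (hf a b ha1 (by omega) hbk))
    · rintro ⟨b, ⟨hb1, hba⟩, rfl⟩
      refine ⟨⟨b, ⟨hb1, by omega⟩, rfl⟩, ?_⟩
      rcases eq_or_lt_of_le hba with h | h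
      · rw [h]
      · exact le_of_lt (hf b a hb1 h hak)
  rw [himg, Finset.card_image_of_injOn, Nat.card_Icc]
  · omega
  · intro b1 hb1 b2 hb2 hfe
    simp only [Finset.coe_Icc, Set.mem_Icc] at hb1 hb2
    by_contra hne
    rcases Nat.lt_or_ge b1 b2 with h | h
    · exact absurd hfe (Nat.ne_of_gt (hf b1 b2 hb1.1 h (by omega)))
    · have h' : b2 < b1 := by omega
      exact absurd hfe.symm (Nat.ne_of_gt (hf b2 b1 hb2.1 h' (by omega)))

lemma anti_image_eq {f g : ℕ → ℕ} {k : ℕ}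
    (hf : ∀ a b, 1 ≤ a → a < b → b ≤ k → f b < f a)
    (hg : ∀ a b, 1 ≤ a → a < b → b ≤ k → g b < g a)
    (h : (Finset.Icc 1 k).image f = (Finset.Icc 1 k).image g) :
    ∀ a, 1 ≤ a → a ≤ k → f a = g a := by
  intro a ha1 hak
  have c1 := filter_card_of_anti hf ha1 hak
  have c2 := filter_card_of_anti hg ha1 hak
  rw [← h] at c2
  set S := (Finset.Icc 1 k).image f with hS
  have hfa : f a ∈ S := Finset.mem_image.mpr ⟨a, Finset.mem_Icc.mpr ⟨ha1, hak⟩, rfl⟩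
  have hga : g a ∈ S := by
    rw [h]; exact Finset.mem_image.mpr ⟨a, Finset.mem_Icc.mpr ⟨ha1, hak⟩, rfl⟩
  by_contra hne
  rcases Nat.lt_or_ge (f a) (g a) with hlt | hge
  · have hsub : S.filter (fun y => g a ≤ y) ⊂ S.filter (fun y => f a ≤ y) := by
      refine ⟨fun y hy => ?_, ?_⟩
      · have hy' := Finset.mem_filter.mp hy
        exact Finset.mem_filter.mpr ⟨hy'.1, le_trans (le_of_lt hlt) hy'.2⟩
      · intro hcon
        have := hcon (Finset.mem_filter.mpr ⟨hfa, le_refl _⟩)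
        have := (Finset.mem_filter.mp this).2
        omega
    have := Finset.card_lt_card hsub
    omega
  · have hlt : g a < f a := by omega
    have hsub : S.filter (fun y => f a ≤ y) ⊂ S.filter (fun y => g a ≤ y) := by
      refine ⟨fun y hy => ?_, ?_⟩
      · have hy' := Finset.mem_filter.mp hy
        exact Finset.mem_filter.mpr ⟨hy'.1, le_trans (le_of_lt hlt) hy'.2⟩
      · intro hcon
        have := hcon (Finset.mem_filter.mpr ⟨hga, le_refl _⟩)
        have := (Finset.mem_filter.mp this).2
        omega
    have := Finset.card_lt_card hsub
    omega
lemma ramsey3_exists : ∀ n, 1 ≤ n → ∃ M, ∀ χ : ℕ → ℕ → Fin n, HasMonoTriangle M n χ := by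
  intro n hn
  induction n with
  | zero => omega
  | succ n IH =>
    rcases Nat.eq_or_lt_of_le hn with h1 | h1
    · -- n + 1 = 1
      refine ⟨3, fun χ => ⟨1, 2, 3, le_refl 1, by omega, by omega, le_refl 3, ?_, ?_⟩⟩
      · have e2 := (χ 1 2).isLt
        have e3 := (χ 2 3).isLt
        have : n = 0 := by omega
        subst this
        exact Fin.ext (by omega)
      · have e2 := (χ 1 2).isLt
        have e3 := (χ 1 3).isLt
        have : n = 0 := by omega
        subst this
        exact Fin.ext (by omega)
    · -- n ≥ 1
      obtain ⟨M, hM⟩ := IH (by omega)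
      refine ⟨(n + 1) * (M + 1) + 1, fun χ => ?_⟩
      set M' := (n + 1) * (M + 1) + 1 with hM'
      have hn1 : 1 ≤ n := by omega
      -- pigeonhole on the colors of pairs (1, v)
      have hcards : (Finset.univ : Finset (Fin (n+1))).card * (M + 1)
          ≤ (Finset.Icc 2 M').card := by
        rw [Finset.card_univ, Fintype.card_fin, Nat.card_Icc]
        omega
      obtain ⟨k, -, hk⟩ := Finset.exists_le_card_fiber_of_mul_le_card_of_maps_to
        (f := fun v => χ 1 v) (fun a _ => Finset.mem_univ _) ⟨0, Finset.mem_univ _⟩ hcards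
      set F := (Finset.Icc 2 M').filter (fun v => χ 1 v = k) with hF
      have hFsub : ∀ v ∈ F, 2 ≤ v ∧ v ≤ M' ∧ χ 1 v = k := by
        intro v hv
        have := Finset.mem_filter.mp hv
        have h2 := Finset.mem_Icc.mp this.1
        exact ⟨h2.1, h2.2, this.2⟩
      by_cases hA : ∃ u ∈ F, ∃ v ∈ F, u < v ∧ χ u v = k
      · obtain ⟨u, hu, v, hv, huv, hc⟩ := hA
        obtain ⟨hu2, huM, huk⟩ := hFsub u hu
        obtain ⟨hv2, hvM, hvk⟩ := hFsub v hv
        exact ⟨1, u, v, le_refl 1, by omega, huv, hvM, by rw [huk, hc], by rw [huk, hvk]⟩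
      · push_neg at hA
        -- re-color F with n colors and apply IH
        set E : ℕ → ℕ := fun i => if h : i - 1 < F.card then F.orderEmbOfFin rfl ⟨i - 1, h⟩
          else 0 with hE
        have hkn : (k : ℕ) ≤ n := by omega
        set remap : Fin (n + 1) → Fin n := fun d =>
          if h : (d : ℕ) < (k : ℕ) then ⟨d, by omega⟩ else ⟨d - 1, by have := d.isLt; omega⟩
          with hremap
        have remap_inj : ∀ d₁ d₂ : Fin (n + 1), d₁ ≠ k → d₂ ≠ k →
            remap d₁ = remap d₂ → d₁ = d₂ := by
          intro d₁ d₂ h₁ h₂ he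
          have hv₁ : (d₁ : ℕ) ≠ (k : ℕ) := fun hc => h₁ (Fin.ext hc)
          have hv₂ : (d₂ : ℕ) ≠ (k : ℕ) := fun hc => h₂ (Fin.ext hc)
          apply Fin.ext
          simp only [hremap] at he
          by_cases q1 : (d₁ : ℕ) < (k : ℕ) <;> by_cases q2 : (d₂ : ℕ) < (k : ℕ) <;>
            [rw [dif_pos q1, dif_pos q2] at he; rw [dif_pos q1, dif_neg q2] at he;
             rw [dif_neg q1, dif_pos q2] at he; rw [dif_neg q1, dif_neg q2] at he] <;>
            · have hval := congrArg (fun x : Fin n => (x : ℕ)) he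
              simp only at hval
              omega
        have hMF : M + 1 ≤ F.card := hk
        have hEmem : ∀ i, 1 ≤ i → i ≤ M → E i ∈ F := by
          intro i hi1 hiM
          have h : i - 1 < F.card := by omega
          simp only [hE, dif_pos h]
          exact Finset.orderEmbOfFin_mem F rfl _
        have hElt : ∀ i j, 1 ≤ i → i < j → j ≤ M → E i < E j := by
          intro i j hi1 hij hjM
          have h1 : i - 1 < F.card := by omega
          have h2 : j - 1 < F.card := by omega
          simp only [hE, dif_pos h1, dif_pos h2]
          exact (F.orderEmbOfFin rfl).strictMono (by simp [Fin.mk_lt_mk]; omega)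
        obtain ⟨i, j, l, hi1, hij, hjl, hlM, hc1, hc2⟩ :=
          hM (fun i j => remap (χ (E i) (E j)))
        have hui := hEmem i hi1 (by omega)
        have huj := hEmem j (by omega) (by omega)
        have hul := hEmem l (by omega) hlM
        have h12 : E i < E j := hElt i j hi1 hij (by omega)
        have h23 : E j < E l := hElt j l (by omega) hjl hlM
        have hne1 : χ (E i) (E j) ≠ k := hA (E i) hui (E j) huj h12
        have hne2 : χ (E j) (E l) ≠ k := hA (E j) huj (E l) hul h23
        have hne3 : χ (E i) (E l) ≠ k := hA (E i) hui (E l) hul (lt_trans h12 h23)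
        refine ⟨E i, E j, E l, by have := (hFsub _ hui).1; omega, h12, h23,
          (hFsub _ hul).2.1, ?_, ?_⟩
        · exact remap_inj _ _ hne1 hne2 hc1
        · exact remap_inj _ _ hne1 hne3 hc2

lemma r3_spec {n : ℕ} (hn : 1 ≤ n) (χ : ℕ → ℕ → Fin n) : HasMonoTriangle (r3 n) n χ := by
  obtain ⟨M, hM⟩ := ramsey3_exists n hn
  have h : r3 n ∈ {N | ∀ χ : ℕ → ℕ → Fin n, HasMonoTriangle N n χ} :=
    Nat.sInf_mem ⟨M, hM⟩
  exact h χ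
lemma part1_main {n : ℕ} (hn : 1 ≤ n) {N : ℕ} (hN : 4 ^ n * r3 n ≤ N)
    (c : ℕ → ℕ → ℕ → Bool) :
    HasRedPath N (n + 2) c ∨ ∃ f : ℕ → ℕ, IsBlueCopy N (2 * n + 1) (edgeI n) c f := by
  by_cases hr : HasRedPath N (n + 2) c
  · exact Or.inl hr
  refine Or.inr ?_
  set φ : ℕ → Finset ℕ := fun v => (Finset.Icc 1 n).image (fun a => gp N n c v a + (n - a))
    with hφ
  have hmaps : ∀ v ∈ Finset.Icc 1 N, φ v ∈ (Finset.range (2 * n)).powerset := by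
    intro v _
    rw [Finset.mem_powerset]
    intro y hy
    simp only [hφ, Finset.mem_image, Finset.mem_Icc] at hy
    obtain ⟨a, ⟨ha1, han⟩, rfl⟩ := hy
    rw [Finset.mem_range]
    have := gp_le N n c v a
    omega
  have hcards : ((Finset.range (2 * n)).powerset).card * r3 n ≤ (Finset.Icc 1 N).card := by
    rw [Finset.card_powerset, Finset.card_range, Nat.card_Icc]
    have h4 : (4 : ℕ) ^ n = 2 ^ (2 * n) := by
      rw [(by norm_num : (4 : ℕ) = 2 ^ 2), ← pow_mul]
    rw [← h4]
    omega
  obtain ⟨y, -, hy⟩ := Finset.exists_le_card_fiber_of_mul_le_card_of_maps_to hmaps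
    ⟨∅, by simp⟩ hcards
  set C := (Finset.Icc 1 N).filter (fun v => φ v = y) with hC
  have hCsub : ∀ v ∈ C, 1 ≤ v ∧ v ≤ N ∧ φ v = y := by
    intro v hv
    have h := Finset.mem_filter.mp hv
    have h2 := Finset.mem_Icc.mp h.1
    exact ⟨h2.1, h2.2, h.2⟩
  set E : ℕ → ℕ := fun t => if h : t - 1 < C.card then C.orderEmbOfFin rfl ⟨t - 1, h⟩ else 0
    with hE
  have hEmem : ∀ t, 1 ≤ t → t ≤ r3 n → E t ∈ C := by
    intro t ht1 htr
    have h : t - 1 < C.card := by omega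
    simp only [hE, dif_pos h]
    exact Finset.orderEmbOfFin_mem C rfl _
  have hElt : ∀ s t, 1 ≤ s → s < t → t ≤ r3 n → E s < E t := by
    intro s t hs1 hst htr
    have h1 : s - 1 < C.card := by omega
    have h2 : t - 1 < C.card := by omega
    simp only [hE, dif_pos h1, dif_pos h2]
    exact (C.orderEmbOfFin rfl).strictMono (by simp [Fin.mk_lt_mk]; omega)
  have hn0 : 0 < n := hn
  set χt : ℕ → ℕ → Fin n :=
    fun s t => ⟨(redPot N n c (E s) (E t) - 1) % n, Nat.mod_lt _ hn0⟩ with hχt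
  obtain ⟨i, j, l, hi1, hij, hjl, hlr, hc1, hc2⟩ := r3_spec hn χt
  have hui := hEmem i hi1 (by omega)
  have huj := hEmem j (by omega) (by omega)
  have hul := hEmem l (by omega) hlr
  set u := E i with hu
  set v := E j with hv
  set w := E l with hw
  have huv : u < v := hElt i j hi1 hij (by omega)
  have hvw : v < w := hElt j l (by omega) hjl hlr
  obtain ⟨hu1, huN, hup⟩ := hCsub u hui
  obtain ⟨hv1, hvN, hvp⟩ := hCsub v huj
  obtain ⟨hw1, hwN, hwp⟩ := hCsub w hul
  have p1 := one_le_redPot (c := c) hn hu1 huv hvN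
  have p1' := redPot_le N n c u v
  have p2 := one_le_redPot (c := c) hn hv1 hvw hwN
  have p2' := redPot_le N n c v w
  have p3 := one_le_redPot (c := c) hn hu1 (lt_trans huv hvw) hwN
  have p3' := redPot_le N n c u w
  have hval1 := congrArg Fin.val hc1
  have hval2 := congrArg Fin.val hc2
  simp only [hχt] at hval1 hval2
  rw [← hu, ← hv, ← hw] at hval1 hval2
  rw [Nat.mod_eq_of_lt (by omega : redPot N n c u v - 1 < n),
    Nat.mod_eq_of_lt (by omega : redPot N n c v w - 1 < n)] at hval1
  rw [Nat.mod_eq_of_lt (by omega : redPot N n c u v - 1 < n),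
    Nat.mod_eq_of_lt (by omega : redPot N n c u w - 1 < n)] at hval2
  have e2 : redPot N n c v w = redPot N n c u v := by omega
  have e3 : redPot N n c u w = redPot N n c u v := by omega
  set a := redPot N n c u v with ha
  have hgp : gp N n c u a = gp N n c w a := by
    have h := anti_image_eq (k := n)
      (f := fun b => gp N n c u b + (n - b)) (g := fun b => gp N n c w b + (n - b))
      ?_ ?_ ?_ a p1 p1'
    · have h2 : gp N n c u a + (n - a) = gp N n c w a + (n - a) := h
      omega
    · intro b b' hb1 hbb hbn
      show gp N n c u b' + (n - b') < gp N n c u b + (n - b)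
      have := gp_anti (c := c) (n := n) hu1 huN (le_of_lt hbb)
      omega
    · intro b b' hb1 hbb hbn
      show gp N n c w b' + (n - b') < gp N n c w b + (n - b)
      have := gp_anti (c := c) (n := n) hw1 hwN (le_of_lt hbb)
      omega
    · show φ u = φ w
      rw [hup, hwp]
  set j₀ := gp N n c u a with hj₀
  have hQu : QI N n c u a j₀ := gp_spec hu1 huN
  by_cases hcase : j₀ = n
  · rw [hcase] at hQu
    obtain ⟨x, hxb, hxm, hxe, -, -⟩ := hQu
    exact ⟨x, hxb, hxm, fun p q r hpqr => hxe p q r hpqr (edgeI_facts hpqr).2.2.2.1⟩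
  · exfalso
    have hj₀n : j₀ < n := lt_of_le_of_ne (gp_le N n c u a) hcase
    have hQw : QI N n c w a (j₀ + 1) := QI_ext hn hr hQu huv hvw hwN rfl e2 e3
    have hge : j₀ + 1 ≤ gp N n c w a := by
      unfold gp
      exact Nat.le_findGreatest (by omega) hQw
    omega
/-- The hypergraph `Iₙ` as a member of the family `𝒥ₙ`, with jump set `{2, 4, …, 2n}`. -/
def IJump (n : ℕ) (hn : 1 ≤ n) : JumpPath n where
  m := 2 * n + 1
  E := edgeI n
  J := (Finset.Icc 1 n).image (fun i => 2 * i)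
  three_le := by omega
  edges_ordered := by
    intro a b d h
    have := edgeI_facts h
    omega
  consec := by
    intro i hi1 hi2
    exact Or.inl ⟨hi1, rfl, rfl, by omega⟩
  jumps_subset := by
    intro v hv
    simp only [Finset.mem_image, Finset.mem_Icc] at hv
    obtain ⟨i, ⟨hi1, hin⟩, rfl⟩ := hv
    simp only [Finset.mem_Icc]
    omega
  jumps_card := by
    rw [Finset.card_image_of_injective _ (fun x y h => by omega), Nat.card_Icc]
    omega
  jumps_nonconsec := by
    intro v hv hcon
    simp only [Finset.mem_image, Finset.mem_Icc] at hv hcon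
    obtain ⟨i, ⟨hi1, hin⟩, rfl⟩ := hv
    obtain ⟨i', ⟨hi1', hin'⟩, he⟩ := hcon
    omega
  cond1a := by
    intro v hv h3
    simp only [Finset.mem_image, Finset.mem_Icc] at hv
    obtain ⟨i, ⟨hi1, hin⟩, rfl⟩ := hv
    refine Or.inr (Or.inr (Or.inl ⟨i - 1, by omega, by omega, by omega, by omega, by omega⟩))
  cond1b := by
    intro v hv h2
    simp only [Finset.mem_image, Finset.mem_Icc] at hv
    obtain ⟨i, ⟨hi1, hin⟩, rfl⟩ := hv
    refine Or.inr (Or.inl ⟨i, hi1, by omega, by omega, by omega, by omega⟩)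
  cond2 := by
    intro v hv1 hv2
    simp only [Finset.mem_image, Finset.mem_Icc] at hv1 hv2
    obtain ⟨i, ⟨hi1, hin⟩, he⟩ := hv1
    obtain ⟨i', ⟨hi1', hin'⟩, he'⟩ := hv2
    refine Or.inr (Or.inr (Or.inr ⟨i, hi1, by omega, by omega, by omega, by omega⟩))

/-- For every positive integer `n` and every `N ≥ 4ⁿ · r(3;n)`, every
red-blue coloring of the triples of `{1,…,N}` contains a red monotone path on `n+2`
vertices or a blue copy of `Iₙ`; consequently `R(P_{n+2}, 𝒥ₙ) ≤ 4ⁿ · r(3;n)`. -/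
theorem upperBound (n : ℕ) (hn : 1 ≤ n) :
    (∀ N, 4 ^ n * r3 n ≤ N → ∀ c : ℕ → ℕ → ℕ → Bool,
      HasRedPath N (n + 2) c ∨ ∃ f : ℕ → ℕ, IsBlueCopy N (2 * n + 1) (edgeI n) c f) ∧
    RamseyPathJump n ≤ 4 ^ n * r3 n := by
  constructor
  · intro N hN c
    exact part1_main hn hN c
  · apply Nat.sInf_le
    intro c
    rcases part1_main hn (le_refl (4 ^ n * r3 n)) c with h | ⟨f, hf⟩
    · exact Or.inl h
    · exact Or.inr ⟨IJump n hn, f, hf⟩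
end

section
/- For every positive integer n, there exists a red-blue coloring of the triples of {1,…,r(3;n)−1} that contains no red monotone path on n+2 vertices and no blue copy of the hypergraph I_n. Consequently r(3;n) ≤ R(P_{n+2}, I_n). -/
-- auxiliary lemmas
lemma noRedPath_of_chi (n N : ℕ) (χ : ℕ → ℕ → Fin n) :
    ¬ HasRedPath N (n + 2) (fun u v w => decide (χ v w < χ u v)) := by
  rintro ⟨p, _, _, hred⟩
  have hd : ∀ i, 1 ≤ i → i ≤ n → (χ (p (i+1)) (p (i+2))).val < (χ (p i) (p (i+1))).val := by
    intro i h1 h2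
    have := hred i h1 (by omega)
    simp only [decide_eq_true_eq] at this
    exact this
  have key : ∀ i, i ≤ n → (χ (p (i+1)) (p (i+2))).val + i ≤ (χ (p 1) (p 2)).val := by
    intro i hi
    induction i with
    | zero => simp
    | succ j ih =>
      have h1 := ih (by omega)
      have h2 := hd (j+1) (by omega) hi
      simp only [show j+1+1 = j+2 from rfl, show j+1+2 = j+3 from rfl] at h2 ⊢
      omega
  have h1 := key n le_rfl
  have h2 := (χ (p (n+1)) (p (n+2))).isLt
  have h3 := (χ (p 1) (p 2)).isLt
  omega

lemma noBlueI_of_chi (n N : ℕ) (hn : 1 ≤ n) (χ : ℕ → ℕ → Fin n)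
    (hχ : ¬ HasMonoTriangle N n χ) (f : ℕ → ℕ) :
    ¬ IsBlueCopy N (2 * n + 1) (edgeI n) (fun u v w => decide (χ v w < χ u v)) f := by
  rintro ⟨hb, hmono, hblue⟩
  have hle : ∀ a b d, edgeI n a b d → (χ (f a) (f b)).val ≤ (χ (f b) (f d)).val := by
    intro a b d he
    have := hblue a b d he
    simp only [decide_eq_false_iff_not, not_lt, Fin.le_def] at this
    exact this
  -- abbreviations
  set E : ℕ → ℕ := fun j => (χ (f j) (f (j+1))).val with hE
  set G : ℕ → ℕ := fun i => (χ (f (2*i+1)) (f (2*i+3))).val with hG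
  -- G i' corresponds to g_{i'+1} : pair (2i'+1, 2i'+3)
  -- (A) consecutive
  have hA : ∀ a, 1 ≤ a → a + 2 ≤ 2*n+1 → E a ≤ E (a+1) := by
    intro a h1 h2
    exact hle a (a+1) (a+2) (Or.inl ⟨h1, rfl, rfl, h2⟩)
  -- (B) g_{i'+1} ≤ e_{2i'+3} for 2i'+4 ≤ 2n+1
  have hB : ∀ i, 2*i + 4 ≤ 2*n+1 → G i ≤ E (2*i+3) := by
    intro i h
    exact hle (2*i+1) (2*i+3) (2*i+4)
      (Or.inr (Or.inl ⟨i+1, by omega, by omega, by omega, by omega, by omega⟩))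
  -- (C) e_{2i'+2} ≤ g_{i'+2} for 2i'+5 ≤ 2n+1
  have hC : ∀ i, 2*i + 5 ≤ 2*n+1 → E (2*i+2) ≤ G (i+1) := by
    intro i h
    exact hle (2*i+2) (2*i+3) (2*i+5)
      (Or.inr (Or.inr (Or.inl ⟨i+1, by omega, by omega, by omega, by omega, by omega⟩)))
  -- (D) g_{i'+1} ≤ g_{i'+2}
  have hD : ∀ i, 2*i + 5 ≤ 2*n+1 → G i ≤ G (i+1) := by
    intro i h
    exact hle (2*i+1) (2*i+3) (2*i+5)
      (Or.inr (Or.inr (Or.inr ⟨i+1, by omega, by omega, by omega, by omega, by omega⟩)))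
  -- (T) triangle-freeness at block i'+1: vertices 2i'+1, 2i'+2, 2i'+3
  have hT : ∀ i, 2*i + 3 ≤ 2*n+1 →
      ¬ (E (2*i+1) = E (2*i+2) ∧ E (2*i+1) = G i) := by
    rintro i h ⟨h1, h2⟩
    apply hχ
    refine ⟨f (2*i+1), f (2*i+2), f (2*i+3), (hb (2*i+1) (by omega) (by omega)).1,
      hmono _ _ (by omega) (by omega) (by omega), hmono _ _ (by omega) (by omega) h,
      (hb (2*i+3) (by omega) h).2, ?_, ?_⟩
    · exact Fin.val_injective h1
    · exact Fin.val_injective h2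
  -- invariant: for 0 ≤ i ≤ n-1,  i+1 ≤ E (2i+2) or i+1 ≤ G i
  have inv : ∀ i, i + 1 ≤ n → i + 1 ≤ E (2*i+2) ∨ i + 1 ≤ G i := by
    intro i
    induction i with
    | zero =>
      intro h
      simp only [show 2*0+2 = 2 from rfl]
      by_cases hE2 : 1 ≤ E 2
      · exact Or.inl hE2
      · right
        by_contra hG1
        have h12 : E 1 ≤ E 2 := hA 1 (by omega) (by omega)
        have hT1 := hT 0 (by omega)
        simp only [show 2*0+2 = 2 from rfl, show 2*0+1 = 1 from rfl] at hT1
        exact hT1 ⟨by omega, by omega⟩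
    | succ j ih =>
      intro h
      have hj := ih (by omega)
      have h1 : E (2*j+2) ≤ E (2*j+3) := hA (2*j+2) (by omega) (by omega)
      have h2 : G j ≤ E (2*j+3) := hB j (by omega)
      have h3 : E (2*j+3) ≤ E (2*j+4) := hA (2*j+3) (by omega) (by omega)
      have h4 : E (2*j+2) ≤ G (j+1) := hC j (by omega)
      have h5 : G j ≤ G (j+1) := hD j (by omega)
      have harg : 2*(j+1)+2 = 2*j+4 := by ring
      rw [harg]
      rcases le_or_gt (j+2) (E (2*j+4)) with hgood | hbad
      · exact Or.inl hgood
      · right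
        have hT2 := hT (j+1) (by omega)
        simp only [show 2*(j+1)+1 = 2*j+3 from by ring, show 2*(j+1)+2 = 2*j+4 from by ring] at hT2
        have hGne : E (2*j+3) ≠ G (j+1) := fun hcon => hT2 ⟨by omega, by omega⟩
        omega
  have hfin := inv (n-1) (by omega)
  have hElt : E (2*(n-1)+2) < n := (χ _ _).isLt
  have hGlt : G (n-1) < n := (χ _ _).isLt
  omega

lemma minHomog (n : ℕ) (hn : 1 ≤ n) (χ : ℕ → ℕ → Fin n) :
    ∀ t (A : Finset ℕ), (n+1)^t ≤ A.card →
    ∃ S : Finset ℕ, S ⊆ A ∧ S.card = t ∧ ∃ col : ℕ → Fin n,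
      ∀ u ∈ S, ∀ v ∈ S, u < v → χ u v = col u := by
  intro t
  induction t with
  | zero =>
    intro A _
    exact ⟨∅, by simp, by simp, fun _ => ⟨0, hn⟩, by simp⟩
  | succ t ih =>
    intro A hA
    have hpt : 1 ≤ (n+1)^t := Nat.one_le_pow _ _ (by omega)
    have hpt1 : (n+1)^(t+1) = n * (n+1)^t + (n+1)^t := by ring
    have hA0 : A.Nonempty := Finset.card_pos.mp (by omega)
    set v := A.min' hA0 with hv
    have hvA : v ∈ A := A.min'_mem hA0
    set B := A.erase v with hB
    have hBcard : (Finset.univ : Finset (Fin n)).card * (n+1)^t ≤ B.card := by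
      have hcb : B.card = A.card - 1 := Finset.card_erase_of_mem hvA
      rw [Finset.card_fin, hcb]
      omega
    obtain ⟨k, -, hk⟩ := Finset.exists_le_card_fiber_of_mul_le_card_of_maps_to
      (f := fun u => χ v u) (fun a _ => Finset.mem_univ _)
      ⟨⟨0, hn⟩, Finset.mem_univ _⟩ hBcard
    obtain ⟨S', hS'sub, hS'card, col', hcol'⟩ := ih _ hk
    have hS'B : ∀ u ∈ S', u ∈ B ∧ χ v u = k := by
      intro u hu
      have := hS'sub hu
      simp only [Finset.mem_filter] at this
      exact this
    have hvS' : v ∉ S' := fun hmem => (Finset.notMem_erase v A) (hS'B v hmem).1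
    refine ⟨insert v S', ?_, ?_, (fun u => if u = v then k else col' u), ?_⟩
    · intro u hu
      rcases Finset.mem_insert.mp hu with rfl | hu
      · exact hvA
      · exact Finset.erase_subset _ _ (hS'B u hu).1
    · rw [Finset.card_insert_of_notMem hvS', hS'card]
    · intro u hu w hw huw
      rcases Finset.mem_insert.mp hu with rfl | hu
      · have hwS' : w ∈ S' := by
          rcases Finset.mem_insert.mp hw with rfl | hw
          · omega
          · exact hw
        simp only [if_pos rfl]
        exact (hS'B w hwS').2
      · have hune : u ≠ v := by
          intro h; exact hvS' (h ▸ hu)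
        have hwS' : w ∈ S' := by
          rcases Finset.mem_insert.mp hw with rfl | hw
          · -- w = v, but v = min' A ≤ u and u ≠ v so v < u < w = v, contradiction
            exfalso
            have : v ≤ u := A.min'_le u (Finset.erase_subset _ _ (hS'B u hu).1)
            omega
          · exact hw
        simp only [if_neg hune]
        exact hcol' u hu w hwS' huw

lemma ramseyClique (n m : ℕ) (hn : 1 ≤ n) (hm : 2 ≤ m) (χ : ℕ → ℕ → Fin n) :
    HasMonoClique ((n+1)^(n*(m-2)+2)) m n χ := by
  set t := n*(m-2)+2 with ht
  set N := (n+1)^t with hN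
  obtain ⟨S, hSsub, hScard, col, hcol⟩ := minHomog n hn χ t (Finset.Icc 1 N)
    (by rw [Nat.card_Icc]; omega)
  have hS0 : S.Nonempty := Finset.card_pos.mp (by omega)
  set w := S.max' hS0 with hw
  have hwS : w ∈ S := S.max'_mem hS0
  set S' := S.erase w with hS'
  have hS'card : S'.card = t - 1 := by rw [hS', Finset.card_erase_of_mem hwS, hScard]
  have hpig : (Finset.univ : Finset (Fin n)).card * (m-2) < S'.card := by
    rw [Finset.card_fin, hS'card]; omega
  obtain ⟨k, -, hk⟩ := Finset.exists_lt_card_fiber_of_mul_lt_card_of_maps_to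
    (f := col) (fun a _ => Finset.mem_univ _) hpig
  obtain ⟨K, hKsub, hKcard⟩ := Finset.exists_subset_card_eq
    (s := Finset.filter (fun x => col x = k) S') (n := m - 1) (by omega)
  have hKS' : ∀ u ∈ K, u ∈ S' ∧ col u = k := by
    intro u hu
    have := hKsub hu
    simp only [Finset.mem_filter] at this
    exact this
  have hwK : w ∉ K := fun hmem => (Finset.notMem_erase w S) (hKS' w hmem).1
  refine ⟨insert w K, ?_, ?_, k, ?_⟩
  · intro u hu
    rcases Finset.mem_insert.mp hu with rfl | hu
    · exact hSsub hwS
    · exact hSsub (Finset.erase_subset _ _ (hKS' u hu).1)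
  · rw [Finset.card_insert_of_notMem hwK, hKcard]; omega
  · intro u hu v hv huv
    have huK : u ∈ K := by
      rcases Finset.mem_insert.mp hu with rfl | hu
      · exfalso
        have hvS : v ∈ S := by
          rcases Finset.mem_insert.mp hv with rfl | hv
          · omega
          · exact Finset.erase_subset _ _ (hKS' v hv).1
        have := S.le_max' v hvS
        omega
      · exact hu
    have hvS : v ∈ S := by
      rcases Finset.mem_insert.mp hv with rfl | hv
      · exact hwS
      · exact Finset.erase_subset _ _ (hKS' v hv).1
    rw [hcol u (Finset.erase_subset _ _ (hKS' u huK).1) v hvS huv, (hKS' u huK).2]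

lemma redPath_restrict (n N : ℕ) (c : ℕ → ℕ → ℕ → Bool) (hnored : ¬ HasRedPath N (n+2) c) :
    ∀ k p, IsRedPath N k c p → k ≤ n + 1 := by
  intro k p hp
  by_contra h
  push_neg at h
  exact hnored ⟨p, fun i h1 h2 => hp.1 i h1 (by omega),
    fun i j h1 h2 h3 => hp.2.1 i j h1 h2 (by omega),
    fun i h1 h2 => hp.2.2 i h1 (by omega)⟩

lemma alpha_bdd (n N : ℕ) (c : ℕ → ℕ → ℕ → Bool) (hnored : ¬ HasRedPath N (n+2) c)
    (u v : ℕ) :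
    BddAbove {e : ℕ | ∃ k p, IsRedPath N k c p ∧ 2 ≤ k ∧ p (k - 1) = u ∧ p k = v ∧ e = k - 1} := by
  refine ⟨n, ?_⟩
  rintro e ⟨k, p, hp, h2, -, -, rfl⟩
  have := redPath_restrict n N c hnored k p hp
  omega

lemma alpha_mem (n N : ℕ) (c : ℕ → ℕ → ℕ → Bool) (hnored : ¬ HasRedPath N (n+2) c)
    (u v : ℕ) (hu : 1 ≤ u) (huv : u < v) (hv : v ≤ N) :
    (1 ≤ alphaFn N c u v ∧ alphaFn N c u v ≤ n) ∧
    ∃ k p, IsRedPath N k c p ∧ 2 ≤ k ∧ p (k - 1) = u ∧ p k = v ∧ alphaFn N c u v = k - 1 := by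
  have hne : (1 : ℕ) ∈ {e : ℕ | ∃ k p, IsRedPath N k c p ∧ 2 ≤ k ∧ p (k - 1) = u ∧ p k = v ∧ e = k - 1} := by
    refine ⟨2, fun i => if i ≤ 1 then u else v, ⟨?_, ?_, ?_⟩, le_rfl, by norm_num, by norm_num, rfl⟩
    · intro i h1 h2
      interval_cases i
      · simp; omega
      · simp; omega
    · intro i j h1 h2 h3
      have : i = 1 ∧ j = 2 := by omega
      obtain ⟨rfl, rfl⟩ := this
      simp; omega
    · intro i h1 h2; omega
  have hbdd := alpha_bdd n N c hnored u v
  have hmem := Nat.sSup_mem ⟨1, hne⟩ hbdd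
  have hle1 : 1 ≤ alphaFn N c u v := le_csSup hbdd hne
  obtain ⟨k, p, hp, h2, hk1, hk2, hk3⟩ := hmem
  have hkb := redPath_restrict n N c hnored k p hp
  have hk3' : alphaFn N c u v = k - 1 := hk3
  exact ⟨⟨hle1, by clear hk3 hne hbdd hp; omega⟩, k, p, hp, h2, hk1, hk2, hk3'⟩

lemma alpha_step (n N : ℕ) (c : ℕ → ℕ → ℕ → Bool) (hnored : ¬ HasRedPath N (n+2) c)
    (u v w : ℕ) (hu : 1 ≤ u) (h1 : u < v) (h2 : v < w) (hw : w ≤ N)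
    (hred : c u v w = true) : alphaFn N c u v + 1 ≤ alphaFn N c v w := by
  obtain ⟨-, k, p, hp, hk2, hpu, hpv, hα⟩ :=
    alpha_mem n N c hnored u v hu h1 (by omega)
  obtain ⟨k', rfl⟩ : ∃ k', k = k' + 2 := ⟨k - 2, by omega⟩
  set q : ℕ → ℕ := fun i => if i ≤ k' + 2 then p i else w with hq
  have hqk : ∀ i, i ≤ k' + 2 → q i = p i := by
    intro i h; simp [hq, h]
  have hqlast : q (k' + 3) = w := by simp [hq]
  have hqmem : (k' + 2) ∈ {e : ℕ | ∃ k p, IsRedPath N k c p ∧ 2 ≤ k ∧ p (k - 1) = v ∧ p k = w ∧ e = k - 1} := by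
    refine ⟨k' + 3, q, ⟨?_, ?_, ?_⟩, by omega, ?_, ?_, by omega⟩
    · intro i hi1 hi2
      rcases le_or_gt i (k' + 2) with h | h
      · rw [hqk i h]; exact hp.1 i hi1 h
      · have : i = k' + 3 := by omega
        rw [this, hqlast]
        omega
    · intro i j hi1 hij hj
      rcases le_or_gt j (k' + 2) with h | h
      · rw [hqk i (by omega), hqk j h]; exact hp.2.1 i j hi1 hij h
      · have hj3 : j = k' + 3 := by omega
        rw [hj3, hqlast, hqk i (by omega)]
        rcases lt_or_eq_of_le (show i ≤ k' + 2 by omega) with hlt | heq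
        · have : p i < p (k' + 2) := hp.2.1 i (k' + 2) hi1 hlt le_rfl
          have : p (k' + 2) = v := hpv
          omega
        · rw [heq, hpv]; exact h2
    · intro i hi1 hi2
      rcases le_or_gt (i + 2) (k' + 2) with h | h
      · rw [hqk i (by omega), hqk (i+1) (by omega), hqk (i+2) h]
        exact hp.2.2 i hi1 h
      · have hieq : i = k' + 1 := by omega
        subst hieq
        rw [hqk (k'+1) (by omega), show k'+1+1 = k'+2 from rfl, show k'+1+2 = k'+3 from rfl,
          hqk (k'+2) le_rfl, hqlast]
        have hu' : p (k' + 1) = u := by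
          have : k' + 2 - 1 = k' + 1 := by omega
          rw [this] at hpu; exact hpu
        rw [hu', hpv]; exact hred
    · have : k' + 3 - 1 = k' + 2 := by omega
      rw [this, hqk (k'+2) le_rfl]; exact hpv
    · exact hqlast
  have hbdd := alpha_bdd n N c hnored v w
  have hge : k' + 2 ≤ alphaFn N c v w := le_csSup hbdd hqmem
  omega

lemma mem_T (n : ℕ) (hn : 1 ≤ n) (c : ℕ → ℕ → ℕ → Bool) :
    HasRedPath ((n+1)^(n*(2*n+1-2)+2)) (n + 2) c ∨
      ∃ f, IsBlueCopy ((n+1)^(n*(2*n+1-2)+2)) (2 * n + 1) (edgeI n) c f := by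
  set N := (n+1)^(n*(2*n+1-2)+2) with hN
  by_cases hred : HasRedPath N (n+2) c
  · exact Or.inl hred
  right
  set χ : ℕ → ℕ → Fin n := fun u v => ⟨(alphaFn N c u v - 1) % n, Nat.mod_lt _ hn⟩ with hχ
  obtain ⟨S, hSsub, hScard, k, hmono⟩ := ramseyClique n (2*n+1) hn (by omega) χ
  set l := S.sort (· ≤ ·) with hl
  have hlen : l.length = 2*n+1 := by rw [hl, Finset.length_sort, hScard]
  set f : ℕ → ℕ := fun i => l.getD (i-1) 0 with hf
  have hfS : ∀ i, 1 ≤ i → i ≤ 2*n+1 → f i ∈ S := by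
    intro i h1 h2
    have hlt : i - 1 < l.length := by omega
    rw [hf]
    simp only
    rw [List.getD_eq_getElem _ _ hlt]
    exact Finset.mem_sort _ |>.mp (List.getElem_mem _)
  have hfb : ∀ i, 1 ≤ i → i ≤ 2*n+1 → 1 ≤ f i ∧ f i ≤ N := by
    intro i h1 h2
    have := hSsub (hfS i h1 h2)
    simpa only [Finset.mem_Icc] using this
  have hfmono : ∀ i j, 1 ≤ i → i < j → j ≤ 2*n+1 → f i < f j := by
    intro i j h1 h2 h3
    have hi : i - 1 < l.length := by omega
    have hj : j - 1 < l.length := by omega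
    rw [hf]
    simp only
    rw [List.getD_eq_getElem _ _ hi, List.getD_eq_getElem _ _ hj]
    have hs := (Finset.sortedLT_sort S).pairwise
    have := List.pairwise_iff_get.mp hs ⟨i-1, hi⟩ ⟨j-1, hj⟩ (by simp; omega)
    simpa using this
  -- alpha is constant = k.val + 1 on pairs of S
  have halpha : ∀ u v, u ∈ S → v ∈ S → u < v → alphaFn N c u v = k.val + 1 := by
    intro u v hus hvs huv
    have hub := hSsub hus
    have hvb := hSsub hvs
    simp only [Finset.mem_Icc] at hub hvb
    have hbounds := (alpha_mem n N c hred u v hub.1 huv hvb.2).1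
    have hcol := hmono u hus v hvs huv
    rw [hχ] at hcol
    have : (alphaFn N c u v - 1) % n = k.val := congrArg Fin.val hcol
    have hmod : (alphaFn N c u v - 1) % n = alphaFn N c u v - 1 :=
      Nat.mod_eq_of_lt (by omega)
    omega
  refine ⟨f, fun i h1 h2 => hfb i h1 h2, hfmono, ?_⟩
  intro a b d he
  have hord : 1 ≤ a ∧ a < b ∧ b < d ∧ d ≤ 2*n+1 := by
    rcases he with ⟨h1, h2, h3, h4⟩ | ⟨i, h1, h2, h3, h4, h5⟩ | ⟨i, h1, h2, h3, h4, h5⟩ |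
      ⟨i, h1, h2, h3, h4, h5⟩ <;> omega
  by_contra hcon
  rw [Bool.not_eq_false] at hcon
  have hab : alphaFn N c (f a) (f b) = k.val + 1 :=
    halpha _ _ (hfS a hord.1 (by omega)) (hfS b (by omega) (by omega))
      (hfmono a b hord.1 hord.2.1 (by omega))
  have hbd : alphaFn N c (f b) (f d) = k.val + 1 :=
    halpha _ _ (hfS b (by omega) (by omega)) (hfS d (by omega) hord.2.2.2)
      (hfmono b d (by omega) hord.2.2.1 hord.2.2.2)
  have := alpha_step n N c hred (f a) (f b) (f d)
    (hfb a hord.1 (by omega)).1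
    (hfmono a b hord.1 hord.2.1 (by omega))
    (hfmono b d (by omega) hord.2.2.1 hord.2.2.2)
    (hfb d (by omega) hord.2.2.2).2 hcon
  omega

/-- For every positive integer `n`, there is a red-blue coloring of the
triples of `{1,…,r(3;n)-1}` with no red monotone path on `n+2` vertices and no blue copy
of `Iₙ`; consequently `r(3;n) ≤ R(P_{n+2}, Iₙ)`. -/
theorem lowerBound_I (n : ℕ) (hn : 1 ≤ n) :
    (∃ c : ℕ → ℕ → ℕ → Bool,
      ¬ HasRedPath (r3 n - 1) (n + 2) c ∧
      ∀ f : ℕ → ℕ, ¬ IsBlueCopy (r3 n - 1) (2 * n + 1) (edgeI n) c f) ∧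
    r3 n ≤ RamseyPathI n := by
  constructor
  · have hchi : ∃ χ : ℕ → ℕ → Fin n, ¬ HasMonoTriangle (r3 n - 1) n χ := by
      by_cases h0 : r3 n = 0
      · refine ⟨fun _ _ => ⟨0, hn⟩, ?_⟩
        rintro ⟨u, v, w, h1, h2, h3, h4, -⟩
        omega
      · have hr : r3 n = sInf {N | ∀ χ : ℕ → ℕ → Fin n, HasMonoTriangle N n χ} := rfl
        have hlt : r3 n - 1 < sInf {N | ∀ χ : ℕ → ℕ → Fin n, HasMonoTriangle N n χ} := by
          omega
        have hnm := Nat.notMem_of_lt_sInf hlt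
        simp only [Set.mem_setOf_eq, not_forall] at hnm
        exact hnm
    obtain ⟨χ, hχ⟩ := hchi
    exact ⟨fun u v w => decide (χ v w < χ u v), noRedPath_of_chi n _ χ,
      fun f => noBlueI_of_chi n _ hn χ hχ f⟩
  · have hTr : RamseyPathI n = sInf {N | ∀ c : ℕ → ℕ → ℕ → Bool,
        HasRedPath N (n + 2) c ∨ ∃ f, IsBlueCopy N (2 * n + 1) (edgeI n) c f} := rfl
    have hTne : {N | ∀ c : ℕ → ℕ → ℕ → Bool,
        HasRedPath N (n + 2) c ∨ ∃ f, IsBlueCopy N (2 * n + 1) (edgeI n) c f}.Nonempty :=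
      ⟨(n+1)^(n*(2*n+1-2)+2), fun c => mem_T n hn c⟩
    have hmem := Nat.sInf_mem hTne
    rw [← hTr] at hmem
    have hS3 : RamseyPathI n ∈ {N | ∀ χ : ℕ → ℕ → Fin n, HasMonoTriangle N n χ} := by
      intro χ
      by_contra hχ
      rcases hmem (fun u v w => decide (χ v w < χ u v)) with hr | ⟨f, hf⟩
      · exact noRedPath_of_chi n _ χ hr
      · exact noBlueI_of_chi n _ hn χ hχ f hf
    exact Nat.sInf_le hS3
end

section
/- For all integers m, n ≥ 3, there exists a red-blue coloring of the triples of {1,…,r(m;n)−1} that contains no red monotone path on n+2 vertices and no blue copy of the (m+1)-th power path P^{m+1}_{mn}. Consequently r(m;n) ≤ R(P_{n+2}, P^{m+1}_{mn}). -/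
section AuxLB4

/-- Growth function for the greedy Ramsey argument. -/
def ramseyF (n : ℕ) : ℕ → ℕ
  | 0 => 0
  | t + 1 => n * ramseyF n t + 1

lemma greedy_tags (n : ℕ) (hn : 1 ≤ n) (χ : ℕ → ℕ → Fin n) :
    ∀ (t : ℕ) (A : Finset ℕ), ramseyF n t ≤ A.card →
    ∃ B : Finset ℕ, B ⊆ A ∧ B.card = t ∧
      ∃ tag : ℕ → Fin n, ∀ u ∈ B, ∀ v ∈ B, u < v → χ u v = tag u := by
  intro t
  induction t with
  | zero =>
    intro A _
    exact ⟨∅, Finset.empty_subset _, Finset.card_empty, fun _ => ⟨0, hn⟩, by simp⟩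
  | succ t ih =>
    intro A hA
    have hF : ramseyF n (t + 1) = n * ramseyF n t + 1 := rfl
    have hne : A.Nonempty := Finset.card_pos.mp (by omega)
    set v := A.min' hne with hv
    have hvA : v ∈ A := A.min'_mem hne
    set A' := A.erase v with hA'
    have hcardA' : A'.card = A.card - 1 := Finset.card_erase_of_mem hvA
    have hcard' : n * ramseyF n t ≤ A'.card := by omega
    haveI : Nonempty (Fin n) := ⟨⟨0, hn⟩⟩
    have hmaps : ∀ x ∈ A', χ v x ∈ (Finset.univ : Finset (Fin n)) := fun _ _ => Finset.mem_univ _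
    obtain ⟨k, -, hk⟩ := Finset.exists_le_card_fiber_of_mul_le_card_of_maps_to hmaps
      Finset.univ_nonempty (by simpa using hcard')
    set C := A'.filter (fun x => χ v x = k) with hC
    obtain ⟨B, hBC, hBcard, tag, htag⟩ := ih C hk
    have hCA' : C ⊆ A' := Finset.filter_subset _ _
    have hvB : v ∉ B := fun hvB => (Finset.notMem_erase v A) (hCA' (hBC hvB))
    refine ⟨insert v B, ?_, ?_, fun x => if x = v then k else tag x, ?_⟩
    · exact Finset.insert_subset hvA ((hBC.trans hCA').trans (Finset.erase_subset _ _))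
    · rw [Finset.card_insert_of_notMem hvB, hBcard]
    · intro u hu w hw huw
      show χ u w = if u = v then k else tag u
      rcases Finset.mem_insert.mp hu with hu | hu
      · have hwB : w ∈ B := by
          rcases Finset.mem_insert.mp hw with hw | hw
          · omega
          · exact hw
        rw [if_pos hu, hu]
        exact (Finset.mem_filter.mp (hBC hwB)).2
      · have huv : u ≠ v := fun h => hvB (h ▸ hu)
        have hwB : w ∈ B := by
          rcases Finset.mem_insert.mp hw with hw | hw
          · exfalso
            have : v ≤ u := A.min'_le u ((Finset.erase_subset _ _) (hCA' (hBC hu)))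
            omega
          · exact hw
        rw [if_neg huv]
        exact htag u hu w hwB huw

lemma ramsey_exists (n s : ℕ) (hn : 1 ≤ n) (hs : 1 ≤ s) :
    ∃ N, ∀ χ : ℕ → ℕ → Fin n, HasMonoClique N s n χ := by
  refine ⟨ramseyF n (n * (s - 1) + 1), fun χ => ?_⟩
  set N := ramseyF n (n * (s - 1) + 1) with hN
  have hcard : ramseyF n (n * (s - 1) + 1) ≤ (Finset.Icc 1 N).card := by
    rw [Nat.card_Icc]; omega
  obtain ⟨B, hBA, hBcard, tag, htag⟩ := greedy_tags n hn χ (n * (s - 1) + 1) (Finset.Icc 1 N) hcard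
  haveI : Nonempty (Fin n) := ⟨⟨0, hn⟩⟩
  have hmaps : ∀ x ∈ B, tag x ∈ (Finset.univ : Finset (Fin n)) := fun _ _ => Finset.mem_univ _
  have hcardlt : (Finset.univ : Finset (Fin n)).card * (s - 1) < B.card := by
    rw [Finset.card_univ, Fintype.card_fin, hBcard]; omega
  obtain ⟨k, -, hk⟩ := Finset.exists_lt_card_fiber_of_mul_lt_card_of_maps_to hmaps hcardlt
  set D := Finset.filter (fun x => tag x = k) B with hD
  obtain ⟨S, hSsub, hScard⟩ := Finset.exists_subset_card_eq (show s ≤ D.card by omega)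
  refine ⟨S, ?_, hScard, k, ?_⟩
  · exact fun x hx => hBA ((Finset.filter_subset _ _) (hSsub hx))
  · intro u hu w hw huw
    have hu' := Finset.mem_filter.mp (hSsub hu)
    have hw' := Finset.mem_filter.mp (hSsub hw)
    rw [htag u hu'.1 w hw'.1 huw, hu'.2]

end AuxLB4
section AuxLB4b

lemma IsRedPath.mono' {N k k' : ℕ} {c : ℕ → ℕ → ℕ → Bool} {p : ℕ → ℕ}
    (h : IsRedPath N k c p) (hk : k' ≤ k) : IsRedPath N k' c p :=
  ⟨fun i h1 h2 => h.1 i h1 (h2.trans hk), fun i j h1 h2 h3 => h.2.1 i j h1 h2 (h3.trans hk),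
   fun i h1 h2 => h.2.2 i h1 (h2.trans hk)⟩

lemma no_red_path (N n : ℕ) (χ : ℕ → ℕ → Fin n) :
    ¬ HasRedPath N (n + 2) (fun u v w => decide (χ u v < χ v w)) := by
  rintro ⟨p, -, -, hred⟩
  have key : ∀ i, 1 ≤ i → i ≤ n + 1 → i - 1 ≤ (χ (p i) (p (i + 1))).val := by
    intro i
    induction i with
    | zero => omega
    | succ i ih =>
      intro _ hi
      by_cases h0 : i = 0
      · subst h0; omega
      · have h1 : 1 ≤ i := by omega
        have hlt : χ (p i) (p (i + 1)) < χ (p (i + 1)) (p (i + 2)) :=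
          of_decide_eq_true (hred i h1 (by omega))
        have h2 := ih h1 (by omega)
        have h3 : (χ (p i) (p (i + 1))).val < (χ (p (i + 1)) (p (i + 2))).val := hlt
        have hee : i + 1 + 1 = i + 2 := by omega
        rw [hee]
        omega
  have h1 := key (n + 1) (by omega) le_rfl
  have h2 := (χ (p (n + 1)) (p (n + 2))).isLt
  omega

lemma clique_of_interval (N n m M : ℕ) (χ : ℕ → ℕ → Fin n) (f : ℕ → ℕ)
    (hm : 1 ≤ m) (lo : ℕ) (hlo : 1 ≤ lo) (hhi : lo + m - 1 ≤ M)
    (hrange : ∀ i, 1 ≤ i → i ≤ M → 1 ≤ f i ∧ f i ≤ N)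
    (hmono : ∀ i j, 1 ≤ i → i < j → j ≤ M → f i < f j)
    (k : Fin n)
    (hcol : ∀ a b, lo ≤ a → a < b → b ≤ lo + m - 1 → χ (f a) (f b) = k) :
    HasMonoClique N m n χ := by
  refine ⟨(Finset.Icc lo (lo + m - 1)).image f, ?_, ?_, k, ?_⟩
  · intro x hx
    obtain ⟨i, hi, rfl⟩ := Finset.mem_image.mp hx
    rw [Finset.mem_Icc] at hi ⊢
    exact hrange i (by omega) (by omega)
  · rw [Finset.card_image_of_injOn, Nat.card_Icc]
    · omega
    · intro a ha b hb hab
      simp only [Finset.coe_Icc, Set.mem_Icc] at ha hb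
      rcases lt_trichotomy a b with h | h | h
      · exact absurd hab (Nat.ne_of_lt (hmono a b (by omega) h (by omega)))
      · exact h
      · exact absurd hab.symm (Nat.ne_of_lt (hmono b a (by omega) h (by omega)))
  · intro u hu v hv huv
    obtain ⟨a, ha, rfl⟩ := Finset.mem_image.mp hu
    obtain ⟨b, hb, rfl⟩ := Finset.mem_image.mp hv
    rw [Finset.mem_Icc] at ha hb
    have hab : a < b := by
      rcases lt_trichotomy a b with h | h | h
      · exact h
      · exact absurd (h ▸ huv) (lt_irrefl _)
      · exact absurd huv (not_lt_of_gt (hmono b a (by omega) h (by omega)))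
    exact hcol a b ha.1 hab hb.2

lemma blue_copy_clique (N n m : ℕ) (hm : 3 ≤ m) (hn : 3 ≤ n) (χ : ℕ → ℕ → Fin n)
    (f : ℕ → ℕ)
    (hf : IsBlueCopy N (m * n) (edgePow (m + 1) (m * n))
      (fun u v w => decide (χ u v < χ v w)) f) :
    HasMonoClique N m n χ := by
  obtain ⟨hrange, hmono, hblue⟩ := hf
  have hq3 : m * 3 ≤ m * n := Nat.mul_le_mul (le_refl m) hn
  have hsub : m * (n - 1) + m = m * n := by
    have h : n - 1 + 1 = n := by omega
    calc m * (n - 1) + m = m * (n - 1 + 1) := by ring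
    _ = m * n := by rw [h]
  have hb' : ∀ a b d, 1 ≤ a → a < b → b < d → d ≤ m * n → d - a ≤ m →
      (χ (f b) (f d)).val ≤ (χ (f a) (f b)).val := by
    intro a b d h1 h2 h3 h4 h5
    have he : edgePow (m + 1) (m * n) a b d := ⟨h1, h2, h3, h4, by omega⟩
    have hbl := hblue a b d he
    simp only [decide_eq_false_iff_not] at hbl
    exact Fin.le_def.mp (Fin.not_lt.mp hbl)
  set g : ℕ → ℕ := fun j => (χ (f j) (f (j + 1))).val with hg
  have gstep : ∀ j, 1 ≤ j → j + 2 ≤ m * n → g (j + 1) ≤ g j := by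
    intro j h1 h2
    exact hb' j (j + 1) (j + 2) h1 (by omega) (by omega) h2 (by omega)
  have gmono : ∀ i j, 1 ≤ i → i ≤ j → j + 1 ≤ m * n → g j ≤ g i := by
    intro i j h1 h2
    induction j, h2 using Nat.le_induction with
    | base => intro _; exact le_rfl
    | succ j hij ih =>
      intro h3
      exact le_trans (gstep j (by omega) (by omega)) (ih (by omega))
  have hlow : ∀ a b, 1 ≤ a → a < b → b + 1 ≤ m * n → b + 1 - a ≤ m →
      g b ≤ (χ (f a) (f b)).val := by
    intro a b h1 h2 h3 h4
    exact hb' a b (b + 1) h1 h2 (by omega) h3 (by omega)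
  have hhigh : ∀ a b, 2 ≤ a → a < b → b ≤ m * n → b - a + 1 ≤ m →
      (χ (f a) (f b)).val ≤ g (a - 1) := by
    intro a b h1 h2 h3 h4
    have h5 := hb' (a - 1) a b (by omega) (by omega) h2 h3 (by omega)
    have ha' : a - 1 + 1 = a := by omega
    show (χ (f a) (f b)).val ≤ (χ (f (a - 1)) (f (a - 1 + 1))).val
    rw [ha']
    exact h5
  have hvlt : ∀ u v, (χ u v).val < n := fun u v => (χ u v).isLt
  rcases eq_or_ne (g m) (n - 1) with hA | hA'
  · -- Case A: top run at the start
    refine clique_of_interval N n m (m * n) χ f (by omega) 1 le_rfl (by omega) hrange hmono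
      ⟨n - 1, by omega⟩ ?_
    intro a b ha hab hb
    have h1 : g m ≤ g b := gmono b m (by omega) (by omega) (by omega)
    have h2 : g b ≤ (χ (f a) (f b)).val := hlow a b ha hab (by omega) (by omega)
    have h3 := hvlt (f a) (f b)
    refine Fin.ext ?_
    show (χ (f a) (f b)).val = n - 1
    omega
  rcases Nat.eq_zero_or_pos (g (m * n - m)) with hB | hB'
  · -- Case B: bottom run at the end
    refine clique_of_interval N n m (m * n) χ f (by omega) (m * n - m + 1) (by omega) (by omega)
      hrange hmono ⟨0, by omega⟩ ?_
    intro a b ha hab hb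
    have h1 : (χ (f a) (f b)).val ≤ g (a - 1) := hhigh a b (by omega) hab (by omega) (by omega)
    have h2 : g (a - 1) ≤ g (m * n - m) := gmono (m * n - m) (a - 1) (by omega) (by omega) (by omega)
    refine Fin.ext ?_
    show (χ (f a) (f b)).val = 0
    omega
  · -- Case C: middle run
    have gmlt : g m < n := hvlt (f m) (f (m + 1))
    have e1 : (n - 2) * m + m = (n - 1) * m := by
      have h : n - 2 + 1 = n - 1 := by omega
      calc (n - 2) * m + m = (n - 2 + 1) * m := by ring
      _ = (n - 1) * m := by rw [h]
    have e2 : (n - 1) * m + m = m * n := by rw [Nat.mul_comm]; exact hsub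
    have hrun : ∃ j, m ≤ j ∧ j + m ≤ m * n - m ∧ g j = g (j + m) := by
      by_contra hcon
      push_neg at hcon
      have chain : ∀ s, m + s * m ≤ m * n - m → g (m + s * m) + s ≤ g m := by
        intro s
        induction s with
        | zero => intro _; simp
        | succ s ih =>
          intro h
          have hsm : (s + 1) * m = s * m + m := Nat.succ_mul s m
          have h1 : m + s * m ≤ m * n - m := by omega
          have h2 := ih h1
          have h3 := hcon (m + s * m) (by omega) (by omega)
          have h4 : g (m + s * m + m) ≤ g (m + s * m) := gmono (m + s * m) (m + s * m + m)
            (by omega) (by omega) (by omega)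
          have h5 : m + (s + 1) * m = m + s * m + m := by omega
          rw [h5]
          omega
      have hfin := chain (n - 2) (by omega)
      have e3 : m + (n - 2) * m = m * n - m := by omega
      rw [e3] at hfin
      omega
    obtain ⟨j, hj1, hj2, hj3⟩ := hrun
    have gconst : ∀ b, j ≤ b → b ≤ j + m → g b = g j := by
      intro b hb1 hb2
      have l1 : g b ≤ g j := gmono j b (by omega) hb1 (by omega)
      have l2 : g (j + m) ≤ g b := gmono b (j + m) (by omega) hb2 (by omega)
      omega
    refine clique_of_interval N n m (m * n) χ f (by omega) (j + 1) (by omega) (by omega)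
      hrange hmono (χ (f j) (f (j + 1))) ?_
    intro a b ha hab hb
    have h1 : g b ≤ (χ (f a) (f b)).val := hlow a b (by omega) hab (by omega) (by omega)
    have h2 : (χ (f a) (f b)).val ≤ g (a - 1) := hhigh a b (by omega) hab (by omega) (by omega)
    have h3 : g b = g j := gconst b (by omega) (by omega)
    have h4 : g (a - 1) = g j := gconst (a - 1) (by omega) (by omega)
    refine Fin.ext ?_
    show (χ (f a) (f b)).val = (χ (f j) (f (j + 1))).val
    have h5 : g j = (χ (f j) (f (j + 1))).val := rfl
    omega

end AuxLB4b
section AuxLB4c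

/-- The defining set of `alphaFn`. -/
def alphaSet (N : ℕ) (c : ℕ → ℕ → ℕ → Bool) (u v : ℕ) : Set ℕ :=
  {e : ℕ | ∃ k p, IsRedPath N k c p ∧ 2 ≤ k ∧ p (k - 1) = u ∧ p k = v ∧ e = k - 1}

lemma alphaFn_eq_sSup (N : ℕ) (c : ℕ → ℕ → ℕ → Bool) (u v : ℕ) :
    alphaFn N c u v = sSup (alphaSet N c u v) := rfl

lemma alphaSet_nonempty (N : ℕ) (c : ℕ → ℕ → ℕ → Bool) (u v : ℕ)
    (hu : 1 ≤ u) (huv : u < v) (hv : v ≤ N) : 1 ∈ alphaSet N c u v := by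
  refine ⟨2, fun i => if i ≤ 1 then u else v, ⟨?_, ?_, ?_⟩, le_rfl, ?_, ?_, rfl⟩
  · intro i h1 h2
    rcases (by omega : i = 1 ∨ i = 2) with h | h <;> subst h <;> simp <;> omega
  · intro i j h1 h2 h3
    have : i = 1 ∧ j = 2 := by omega
    obtain ⟨rfl, rfl⟩ := this
    simpa using huv
  · intro i h1 h2; omega
  · norm_num
  · norm_num

lemma alphaSet_bound (N n : ℕ) (c : ℕ → ℕ → ℕ → Bool) (hnored : ¬ HasRedPath N (n + 2) c)
    (u v : ℕ) : ∀ e ∈ alphaSet N c u v, e ≤ n := by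
  rintro e ⟨k, p, hp, hk2, -, -, rfl⟩
  by_contra h
  push_neg at h
  exact hnored ⟨p, hp.mono' (by omega)⟩

lemma alphaSet_bddAbove (N n : ℕ) (c : ℕ → ℕ → ℕ → Bool) (hnored : ¬ HasRedPath N (n + 2) c)
    (u v : ℕ) : BddAbove (alphaSet N c u v) :=
  ⟨n, fun e he => alphaSet_bound N n c hnored u v e he⟩

lemma alphaFn_mem (N n : ℕ) (c : ℕ → ℕ → ℕ → Bool) (hnored : ¬ HasRedPath N (n + 2) c)
    (u v : ℕ) (hu : 1 ≤ u) (huv : u < v) (hv : v ≤ N) :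
    alphaFn N c u v ∈ alphaSet N c u v := by
  rw [alphaFn_eq_sSup]
  exact Nat.sSup_mem ⟨1, alphaSet_nonempty N c u v hu huv hv⟩
    (alphaSet_bddAbove N n c hnored u v)

lemma alphaFn_bounds (N n : ℕ) (c : ℕ → ℕ → ℕ → Bool) (hnored : ¬ HasRedPath N (n + 2) c)
    (u v : ℕ) (hu : 1 ≤ u) (huv : u < v) (hv : v ≤ N) :
    1 ≤ alphaFn N c u v ∧ alphaFn N c u v ≤ n := by
  constructor
  · rw [alphaFn_eq_sSup]
    exact le_csSup (alphaSet_bddAbove N n c hnored u v) (alphaSet_nonempty N c u v hu huv hv)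
  · rw [alphaFn_eq_sSup]
    exact csSup_le ⟨1, alphaSet_nonempty N c u v hu huv hv⟩
      (alphaSet_bound N n c hnored u v)

lemma alphaFn_extend (N n : ℕ) (c : ℕ → ℕ → ℕ → Bool) (hnored : ¬ HasRedPath N (n + 2) c)
    (u v w : ℕ) (hu : 1 ≤ u) (huv : u < v) (hvw : v < w) (hw : w ≤ N)
    (hred : c u v w = true) : alphaFn N c u v + 1 ≤ alphaFn N c v w := by
  obtain ⟨k, p, hp, hk2, hpk1, hpk, hke⟩ := alphaFn_mem N n c hnored u v hu huv (by omega)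
  set q : ℕ → ℕ := fun i => if i ≤ k then p i else w with hqdef
  have hq : IsRedPath N (k + 1) c q := by
    refine ⟨?_, ?_, ?_⟩
    · intro i h1 h2
      by_cases h : i ≤ k
      · show 1 ≤ (if i ≤ k then p i else w) ∧ (if i ≤ k then p i else w) ≤ N
        rw [if_pos h]
        exact hp.1 i h1 h
      · show 1 ≤ (if i ≤ k then p i else w) ∧ (if i ≤ k then p i else w) ≤ N
        rw [if_neg h]
        omega
    · intro i j h1 h2 h3
      by_cases hj : j ≤ k
      · show (if i ≤ k then p i else w) < (if j ≤ k then p j else w)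
        rw [if_pos (by omega : i ≤ k), if_pos hj]
        exact hp.2.1 i j h1 h2 hj
      · have hj' : j = k + 1 := by omega
        show (if i ≤ k then p i else w) < (if j ≤ k then p j else w)
        rw [if_pos (by omega : i ≤ k), if_neg hj]
        have : p i ≤ p k := by
          rcases (by omega : i = k ∨ i < k) with h | h
          · exact h ▸ le_rfl
          · exact le_of_lt (hp.2.1 i k h1 h le_rfl)
        omega
    · intro i h1 h2
      by_cases h : i + 2 ≤ k
      · show c (if i ≤ k then p i else w) (if i + 1 ≤ k then p (i + 1) else w)
            (if i + 2 ≤ k then p (i + 2) else w) = true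
        rw [if_pos (by omega : i ≤ k), if_pos (by omega : i + 1 ≤ k), if_pos h]
        exact hp.2.2 i h1 h
      · have hi : i = k - 1 := by omega
        show c (if i ≤ k then p i else w) (if i + 1 ≤ k then p (i + 1) else w)
            (if i + 2 ≤ k then p (i + 2) else w) = true
        rw [if_pos (by omega : i ≤ k), if_pos (by omega : i + 1 ≤ k), if_neg (by omega)]
        have hi1 : i + 1 = k := by omega
        rw [hi1, hi, hpk1, hpk]
        exact hred
  have hmem : k ∈ alphaSet N c v w := by
    refine ⟨k + 1, q, hq, by omega, ?_, ?_, by omega⟩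
    · show (if k + 1 - 1 ≤ k then p (k + 1 - 1) else w) = v
      rw [if_pos (by omega)]
      have : k + 1 - 1 = k := by omega
      rw [this]
      exact hpk
    · show (if k + 1 ≤ k then p (k + 1) else w) = w
      rw [if_neg (by omega)]
  have hle : k ≤ alphaFn N c v w := by
    rw [alphaFn_eq_sSup]
    exact le_csSup (alphaSet_bddAbove N n c hnored v w) hmem
  omega

lemma red_or_blue (N n m : ℕ) (hm : 3 ≤ m) (hn : 3 ≤ n)
    (hram : ∀ χ : ℕ → ℕ → Fin n, HasMonoClique N (m * n) n χ) :
    ∀ c : ℕ → ℕ → ℕ → Bool,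
      HasRedPath N (n + 2) c ∨ ∃ f, IsBlueCopy N (m * n) (edgePow (m + 1) (m * n)) c f := by
  intro c
  by_cases hred : HasRedPath N (n + 2) c
  · exact Or.inl hred
  right
  have hn0 : 0 < n := by omega
  set χ : ℕ → ℕ → Fin n := fun u v => ⟨(alphaFn N c u v - 1) % n, Nat.mod_lt _ hn0⟩ with hχ
  obtain ⟨S, hS1, hS2, k, hk⟩ := hram χ
  have hmem : ∀ x ∈ S, 1 ≤ x ∧ x ≤ N := by
    intro x hx
    have := hS1 hx
    rwa [Finset.mem_Icc] at this
  have hblue : ∀ u v w, u ∈ S → v ∈ S → w ∈ S → u < v → v < w → c u v w = false := by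
    intro u v w hu hv hw huv hvw
    by_contra hcc
    have hcc' : c u v w = true := by
      rcases Bool.eq_false_or_eq_true (c u v w) with h | h
      · exact h
      · exact absurd h hcc
    have hu' := hmem u hu
    have hv' := hmem v hv
    have hw' := hmem w hw
    have hext := alphaFn_extend N n c hred u v w hu'.1 huv hvw hw'.2 hcc'
    have a1 := alphaFn_bounds N n c hred u v hu'.1 huv (by omega)
    have a2 := alphaFn_bounds N n c hred v w hv'.1 hvw hw'.2
    have e1 : χ u v = k := hk u hu v hv huv
    have e2 : χ v w = k := hk v hv w hw hvw
    have e3 : (alphaFn N c u v - 1) % n = (alphaFn N c v w - 1) % n :=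
      congrArg Fin.val (e1.trans e2.symm)
    rw [Nat.mod_eq_of_lt (by omega), Nat.mod_eq_of_lt (by omega)] at e3
    omega
  set e : Fin (m * n) ↪o ℕ := S.orderEmbOfFin hS2 with he
  refine ⟨fun i => if h : i - 1 < m * n then e ⟨i - 1, h⟩ else 0, ?_, ?_, ?_⟩
  · intro i h1 h2
    beta_reduce
    rw [dif_pos (by omega : i - 1 < m * n)]
    exact hmem _ (Finset.orderEmbOfFin_mem S hS2 _)
  · intro i j h1 h2 h3
    beta_reduce
    rw [dif_pos (by omega : i - 1 < m * n), dif_pos (by omega : j - 1 < m * n)]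
    exact e.strictMono (by simp [Fin.mk_lt_mk]; omega)
  · intro a b d hE
    obtain ⟨ha1, hab, hbd, hd, -⟩ := hE
    beta_reduce
    rw [dif_pos (by omega : a - 1 < m * n), dif_pos (by omega : b - 1 < m * n),
      dif_pos (by omega : d - 1 < m * n)]
    refine hblue _ _ _ (Finset.orderEmbOfFin_mem S hS2 _) (Finset.orderEmbOfFin_mem S hS2 _)
      (Finset.orderEmbOfFin_mem S hS2 _) ?_ ?_
    · exact e.strictMono (by simp [Fin.mk_lt_mk]; omega)
    · exact e.strictMono (by simp [Fin.mk_lt_mk]; omega)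

end AuxLB4c
/-- For all integers `m, n ≥ 3`, there is a red-blue coloring of the
triples of `{1,…,r(m;n)-1}` with no red monotone path on `n+2` vertices and no blue copy
of the `(m+1)`-th power path `P^{m+1}_{mn}`; consequently
`r(m;n) ≤ R(P_{n+2}, P^{m+1}_{mn})`. -/
theorem lowerBound_general (m n : ℕ) (hm : 3 ≤ m) (hn : 3 ≤ n) :
    (∃ c : ℕ → ℕ → ℕ → Bool,
      ¬ HasRedPath (multicolorRamsey m n - 1) (n + 2) c ∧
      ∀ f : ℕ → ℕ,
        ¬ IsBlueCopy (multicolorRamsey m n - 1) (m * n) (edgePow (m + 1) (m * n)) c f) ∧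
    multicolorRamsey m n ≤ RamseyPathPow n (m + 1) (m * n) := by
  have hn0 : 0 < n := by omega
  have hrdef : multicolorRamsey m n
      = sInf {N | ∀ χ : ℕ → ℕ → Fin n, HasMonoClique N m n χ} := rfl
  obtain ⟨N₁, hN₁⟩ := ramsey_exists n m (by omega) (by omega)
  have hTne : ({N | ∀ χ : ℕ → ℕ → Fin n, HasMonoClique N m n χ}).Nonempty := ⟨N₁, hN₁⟩
  have hrT : multicolorRamsey m n ∈ {N | ∀ χ : ℕ → ℕ → Fin n, HasMonoClique N m n χ} := by
    rw [hrdef]; exact Nat.sInf_mem hTne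
  have h0T : (0 : ℕ) ∉ {N | ∀ χ : ℕ → ℕ → Fin n, HasMonoClique N m n χ} := by
    intro h
    obtain ⟨S, hS1, hS2, -⟩ := h (fun _ _ => ⟨0, hn0⟩)
    have hSe : S = ∅ := Finset.subset_empty.mp (by simpa using hS1)
    rw [hSe] at hS2
    simp at hS2
    omega
  have hr1 : 1 ≤ multicolorRamsey m n := by
    by_contra h
    push_neg at h
    have h0 : multicolorRamsey m n = 0 := by omega
    rw [h0] at hrT
    exact h0T hrT
  have hnot : multicolorRamsey m n - 1 ∉ {N | ∀ χ : ℕ → ℕ → Fin n, HasMonoClique N m n χ} := by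
    apply Nat.notMem_of_lt_sInf
    rw [← hrdef]
    omega
  simp only [Set.mem_setOf_eq] at hnot
  push_neg at hnot
  obtain ⟨χ₀, hχ₀⟩ := hnot
  constructor
  · refine ⟨fun u v w => decide (χ₀ u v < χ₀ v w), no_red_path _ n χ₀, ?_⟩
    intro f hf
    exact hχ₀ (blue_copy_clique _ n m hm hn χ₀ f hf)
  · obtain ⟨N₂, hN₂⟩ := ramsey_exists n (m * n) (by omega)
      (Nat.one_le_iff_ne_zero.mpr (Nat.mul_ne_zero (by omega) (by omega)))
    have hdef2 : RamseyPathPow n (m + 1) (m * n)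
        = sInf {N | ∀ c : ℕ → ℕ → ℕ → Bool,
            HasRedPath N (n + 2) c ∨
              ∃ f, IsBlueCopy N (m * n) (edgePow (m + 1) (m * n)) c f} := rfl
    have hS'ne : ({N | ∀ c : ℕ → ℕ → ℕ → Bool,
        HasRedPath N (n + 2) c ∨
          ∃ f, IsBlueCopy N (m * n) (edgePow (m + 1) (m * n)) c f}).Nonempty :=
      ⟨N₂, red_or_blue N₂ n m hm hn hN₂⟩
    have hsinf : RamseyPathPow n (m + 1) (m * n) ∈ {N | ∀ c : ℕ → ℕ → ℕ → Bool,
        HasRedPath N (n + 2) c ∨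
          ∃ f, IsBlueCopy N (m * n) (edgePow (m + 1) (m * n)) c f} := by
      rw [hdef2]; exact Nat.sInf_mem hS'ne
    rw [hrdef]
    apply Nat.sInf_le
    intro χ
    rcases hsinf (fun u v w => decide (χ u v < χ v w)) with h | ⟨f, hf⟩
    · exact absurd h (no_red_path _ n χ)
    · exact blue_copy_clique _ n m hm hn χ f hf
end

section
/- Let n ≥ 1 and let H ∈ 𝒥_n be a monotone path with n jumps on vertex set {1,…,m} with jump set J, and let G_H be its associated ordered graph. If χ is a coloring of the edges of G_H with n colors such that χ(u,v) ≥ χ(v,w) for every edge (u,v,w) of H for which both (u,v) and (v,w) are edges of G_H, then G_H contains a monochromatic triangle under χ, i.e., vertices x < y < z pairwise adjacent in G_H with χ(x,y) = χ(y,z) = χ(x,z). -/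
/-- If `H ∈ 𝒥ₙ` (`n ≥ 1`) with associated ordered graph `G_H`, and `χ`
is an `n`-coloring of the edges of `G_H` with `χ(u,v) ≥ χ(v,w)` for every edge `(u,v,w)`
of `H` both of whose pairs `(u,v)`, `(v,w)` are edges of `G_H`, then `G_H` contains a
monochromatic triangle under `χ`. -/
theorem mono_triangle_in_GH (n : ℕ) (hn : 1 ≤ n) (H : JumpPath n) (χ : ℕ → ℕ → Fin n)
    (hχ : ∀ u v w, H.E u v w → GEdge H.m H.J u v → GEdge H.m H.J v w → χ v w ≤ χ u v) :
    ∃ x y z, x < y ∧ y < z ∧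
      GEdge H.m H.J x y ∧ GEdge H.m H.J y z ∧ GEdge H.m H.J x z ∧
      χ x y = χ y z ∧ χ x y = χ x z := by
  classical
  by_contra hcon
  push_neg at hcon
  have hm := H.three_le
  have hbound : ∀ v ∈ H.J, 2 ≤ v ∧ v ≤ H.m - 1 := fun v hv => Finset.mem_Icc.mp (H.jumps_subset hv)
  have gc : ∀ i, 1 ≤ i → i + 1 ≤ H.m → GEdge H.m H.J i (i+1) := fun i h1 h2 => Or.inl ⟨h1, rfl, h2⟩
  have gj : ∀ u, u + 1 ∈ H.J → GEdge H.m H.J u (u+2) := by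
    intro u hu
    exact Or.inr ⟨u+1, hu, by omega, by omega⟩
  have step : ∀ k, 1 ≤ k → k + 2 ≤ H.m → (χ (k+1) (k+2)).val ≤ (χ k (k+1)).val := by
    intro k h1 h2
    exact Fin.le_def.mp (hχ k (k+1) (k+2) (H.consec k h1 h2) (gc k h1 (by omega))
      (gc (k+1) (by omega) (by omega)))
  have mono : ∀ i, 1 ≤ i → ∀ j, i ≤ j → j + 1 ≤ H.m → (χ j (j+1)).val ≤ (χ i (i+1)).val := by
    intro i hi j hij
    induction j, hij using Nat.le_induction with
    | base => intro _; exact le_rfl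
    | succ k hk ih =>
      intro hkm
      exact le_trans (step k (by omega) (by omega)) (ih (by omega))
  have perjump : ∀ u, u + 1 ∈ H.J →
      min (χ (u+1) (u+2)).val (χ u (u+2)).val < max (χ u (u+1)).val (χ u (u+2)).val := by
    intro u hu
    obtain ⟨h2, hm1⟩ := hbound (u+1) hu
    have h1 : (χ (u+1) (u+2)).val ≤ (χ u (u+1)).val := step u (by omega) (by omega)
    have hne : (χ u (u+1)).val = (χ (u+1) (u+2)).val → (χ u (u+1)).val ≠ (χ u (u+2)).val := by
      intro hA hB
      exact hcon u (u+1) (u+2) (by omega) (by omega) (gc u (by omega) (by omega))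
        (gc (u+1) (by omega) (by omega)) (gj u hu) (Fin.val_injective hA) (Fin.val_injective hB)
    omega
  have chain : ∀ u x, u + 1 ∈ H.J → x + 2 ∈ H.J → u + 1 ≤ x →
      max (χ (x+1) (x+2)).val (χ (x+1) (x+3)).val
        ≤ min (χ (u+1) (u+2)).val (χ u (u+2)).val := by
    intro u x hu hx hux
    obtain ⟨hu2, hum⟩ := hbound (u+1) hu
    obtain ⟨hx2, hxm⟩ := hbound (x+2) hx
    have hxm' : x + 3 ≤ H.m := by omega
    have c2 : (χ (u+2) (u+3)).val ≤ (χ u (u+2)).val :=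
      Fin.le_def.mp (hχ u (u+2) (u+3) (H.cond1b (u+1) hu (by omega)) (gj u hu)
        (gc (u+2) (by omega) (by omega)))
    have c1 : (χ (x+1) (x+2)).val ≤ (χ (u+1) (u+2)).val :=
      mono (u+1) (by omega) (x+1) (by omega) (by omega)
    have c3 : (χ (x+1) (x+2)).val ≤ (χ u (u+2)).val :=
      le_trans (mono (u+2) (by omega) (x+1) (by omega) (by omega)) c2
    have c4 : (χ (x+1) (x+3)).val ≤ (χ x (x+1)).val :=
      Fin.le_def.mp (hχ x (x+1) (x+3) (H.cond1a (x+2) hx (by omega))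
        (gc x (by omega) (by omega)) (gj (x+1) hx))
    have c5 : (χ x (x+1)).val ≤ (χ (u+1) (u+2)).val :=
      mono (u+1) (by omega) x (by omega) (by omega)
    have c6 : (χ (x+1) (x+3)).val ≤ (χ u (u+2)).val := by
      rcases Nat.eq_or_lt_of_le hux with h | h
      · subst h
        exact Fin.le_def.mp (hχ u (u+2) (u+4) (H.cond2 (u+2) hu hx) (gj u hu) (gj (u+2) hx))
      · exact le_trans c4 (le_trans (mono (u+2) (by omega) x (by omega) (by omega)) c2)
    have c7 : (χ (x+1) (x+3)).val ≤ (χ (u+1) (u+2)).val := le_trans c4 c5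
    omega
  set g : ℕ → ℕ := fun v => min (χ v (v+1)).val (χ (v-1) (v+1)).val with hg
  have gnorm : ∀ u, g (u+1) = min (χ (u+1) (u+2)).val (χ u (u+2)).val := by
    intro u
    simp only [hg, Nat.add_sub_cancel]
  have gbound : ∀ v ∈ H.J, g v ∈ Finset.range (n-1) := by
    intro v hv
    obtain ⟨h2, hm1⟩ := hbound v hv
    obtain ⟨u, rfl⟩ : ∃ u, v = u + 1 := ⟨v - 1, by omega⟩
    have hpj := perjump u hv
    have l1 : (χ u (u+1)).val < n := (χ u (u+1)).isLt
    have l2 : (χ u (u+2)).val < n := (χ u (u+2)).isLt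
    rw [Finset.mem_range, gnorm]
    omega
  have strictdec : ∀ p ∈ H.J, ∀ q ∈ H.J, p < q → g q < g p := by
    intro p hp q hq hpq
    obtain ⟨hp2, hpm⟩ := hbound p hp
    obtain ⟨hq2, hqm⟩ := hbound q hq
    have hpq2 : p + 2 ≤ q := by
      rcases Nat.eq_or_lt_of_le hpq with h | h
      · have : p + 1 ∈ H.J := by have e : p + 1 = q := by omega
                                 rw [e]; exact hq
        exact absurd this (H.jumps_nonconsec p hp)
      · omega
    obtain ⟨u, rfl⟩ : ∃ u, p = u + 1 := ⟨p - 1, by omega⟩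
    obtain ⟨x, rfl⟩ : ∃ x, q = x + 2 := ⟨q - 2, by omega⟩
    have hpj := perjump (x+1) hq
    have hch := chain u x hp hq (by omega)
    rw [gnorm, gnorm]
    simp only [show x+1+1 = x+2 from by omega, show x+1+2 = x+3 from by omega] at hpj ⊢
    omega
  have hinj : Set.InjOn g ↑H.J := by
    intro p hp q hq hpqeq
    by_contra hne
    rcases lt_or_gt_of_ne hne with h | h
    · have := strictdec p (Finset.mem_coe.mp hp) q (Finset.mem_coe.mp hq) h; omega
    · have := strictdec q (Finset.mem_coe.mp hq) p (Finset.mem_coe.mp hp) h; omega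
  have hcard := Finset.card_le_card_of_injOn g gbound hinj
  rw [H.jumps_card, Finset.card_range] at hcard
  omega
end

section
/- Let n ≥ 1 and let χ be a coloring of the pairs of {1,…,N} with n colors containing no monochromatic triangle (no u < v < w with χ(u,v) = χ(v,w) = χ(u,w)). Color each triple (u,v,w) with u < v < w blue if χ(u,v) ≥ χ(v,w) and red otherwise. Then this red-blue coloring of the triples of {1,…,N} contains no blue copy of any member of 𝒥_n. -/
/-- If `χ` is an `n`-coloring (`n ≥ 1`) of the pairs of `{1,…,N}` with no
monochromatic triangle, and a triple `(u,v,w)` is colored blue iff `χ(u,v) ≥ χ(v,w)`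
(red otherwise), then the resulting triple coloring has no blue copy of any member
of `𝒥ₙ`. -/
theorem no_blue_jump_path (n N : ℕ) (hn : 1 ≤ n) (χ : ℕ → ℕ → Fin n)
    (hχ : ¬ HasMonoTriangle N n χ) :
    ∀ H : JumpPath n, ∀ f : ℕ → ℕ,
      ¬ IsBlueCopy N H.m H.E (fun u v w => decide (χ u v < χ v w)) f := by
  intro H f hf
  obtain ⟨hbound, hmonof, hblue⟩ := hf
  set m := H.m with hm
  have h3m : 3 ≤ m := H.three_le
  have hblue' : ∀ a b d, H.E a b d → ((χ (f b) (f d) : ℕ) ≤ (χ (f a) (f b) : ℕ)) := by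
    intro a b d he
    have h := hblue a b d he
    simp only [decide_eq_false_iff_not, not_lt] at h
    exact_mod_cast h
  -- abbreviations
  set c' : ℕ → ℕ := fun i => ((χ (f i) (f (i + 1)) : ℕ)) with hc'
  set b' : ℕ → ℕ := fun v => ((χ (f (v - 1)) (f (v + 1)) : ℕ)) with hb'
  have step : ∀ i, 1 ≤ i → i + 2 ≤ m → c' (i + 1) ≤ c' i := by
    intro i h1 h2
    have := hblue' i (i + 1) (i + 2) (H.consec i h1 h2)
    simpa [hc', show i + 1 + 1 = i + 2 by omega] using this
  have mono : ∀ i j, 1 ≤ i → i ≤ j → j ≤ m - 1 → c' j ≤ c' i := by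
    intro i j h1 h2 h3
    induction j with
    | zero => omega
    | succ k ih =>
      rcases Nat.lt_or_ge i (k + 1) with h | h
      · have hik : i ≤ k := by omega
        have hk1 : 1 ≤ k := by omega
        have := step k hk1 (by omega)
        exact le_trans this (ih hik (by omega))
      · have : i = k + 1 := by omega
        simp [this]
  have cond1a' : ∀ v, v ∈ H.J → 3 ≤ v → b' v ≤ c' (v - 2) := by
    intro v hv h3
    have := hblue' (v - 2) (v - 1) (v + 1) (H.cond1a v hv h3)
    simpa [hc', hb', show v - 2 + 1 = v - 1 by omega] using this
  have cond1b' : ∀ v, v ∈ H.J → 2 ≤ v → v + 2 ≤ m → c' (v + 1) ≤ b' v := by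
    intro v hv h2 hvm
    have := hblue' (v - 1) (v + 1) (v + 2) (H.cond1b v hv hvm)
    simpa [hc', hb', show v + 1 + 1 = v + 2 by omega] using this
  have cond2' : ∀ u, u ∈ H.J → u + 2 ∈ H.J → 2 ≤ u → b' (u + 2) ≤ b' u := by
    intro u hu hu2 h2u
    have hE := H.cond2 (u + 1) (by simpa using hu) (by simpa using hu2)
    have := hblue' (u + 1 - 2) (u + 1) (u + 1 + 2) hE
    simpa [hb', show u + 1 - 2 = u - 1 by omega, show u + 2 - 1 = u + 1 by omega,
      show u + 1 + 2 = u + 2 + 1 by omega] using this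
  have jmem : ∀ v ∈ H.J, 2 ≤ v ∧ v ≤ m - 1 := by
    intro v hv
    have := H.jumps_subset hv
    rw [Finset.mem_Icc] at this
    exact this
  have tri : ∀ v, 2 ≤ v → v ≤ m - 1 → ¬ (c' (v - 1) = c' v ∧ c' (v - 1) = b' v) := by
    intro v h2 hvm ⟨h1, h2'⟩
    apply hχ
    refine ⟨f (v - 1), f v, f (v + 1), ?_, ?_, ?_, ?_, ?_, ?_⟩
    · exact (hbound (v - 1) (by omega) (by omega)).1
    · exact hmonof (v - 1) v (by omega) (by omega) (by omega)
    · exact hmonof v (v + 1) (by omega) (by omega) (by omega)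
    · exact (hbound (v + 1) (by omega) (by omega)).2
    · have h1' : c' (v - 1) = c' v := h1
      simp only [hc', show v - 1 + 1 = v by omega] at h1'
      exact Fin.val_injective h1'
    · have h2'' : c' (v - 1) = b' v := h2'
      simp only [hc', hb', show v - 1 + 1 = v by omega] at h2''
      exact Fin.val_injective h2''
  -- main induction over sorted jump list
  have key : ∀ l : List ℕ, l.Chain' (· < ·) → (∀ x ∈ l, x ∈ H.J) →
      ∀ t : ℕ, (∀ v, l.head? = some v → c' (v - 1) ≤ t ∧ b' v ≤ t) → l.length ≤ t := by
    intro l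
    induction l with
    | nil => intro _ _ t _; simp
    | cons v rest ih =>
      intro hchain hmem t hinv
      obtain ⟨hc1, hb1⟩ := hinv v rfl
      have hvJ : v ∈ H.J := hmem v (by simp)
      obtain ⟨hv2, hvm⟩ := jmem v hvJ
      have hstep : c' v ≤ c' (v - 1) := by
        have := step (v - 1) (by omega) (by omega)
        rwa [show v - 1 + 1 = v by omega] at this
      have htri := tri v hv2 hvm
      have hcases : c' v < t ∨ (c' v = c' (v - 1) ∧ b' v < c' (v - 1)) := by
        rcases lt_or_eq_of_le hstep with h | h
        · left; omega
        · rcases lt_trichotomy (b' v) (c' (v - 1)) with h2 | h2 | h2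
          · right; exact ⟨h, h2⟩
          · exact absurd ⟨h.symm, h2.symm⟩ htri
          · left; omega
      obtain ⟨t', ht'lt, ht'c, ht'b⟩ :
          ∃ t', t' < t ∧ (∀ w ∈ H.J, v + 2 ≤ w → w ≤ m - 1 → c' (w - 1) ≤ t') ∧
            (∀ w ∈ H.J, v + 2 ≤ w → w ≤ m - 1 → b' w ≤ t') := by
        rcases hcases with hAB | ⟨hEq, hC⟩
        · refine ⟨c' v, hAB, ?_, ?_⟩
          · intro w _ hw2 hwm
            exact mono v (w - 1) (by omega) (by omega) (by omega)
          · intro w hwJ hw2 hwm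
            exact le_trans (cond1a' w hwJ (by omega))
              (mono v (w - 2) (by omega) (by omega) (by omega))
        · refine ⟨b' v, by omega, ?_, ?_⟩
          · intro w _ hw2 hwm
            have h1b := cond1b' v hvJ hv2 (by omega)
            exact le_trans (mono (v + 1) (w - 1) (by omega) (by omega) (by omega)) h1b
          · intro w hwJ hw2 hwm
            rcases Nat.lt_or_ge w (v + 3) with hwe | hwe
            · have hw : w = v + 2 := by omega
              subst hw
              exact cond2' v hvJ hwJ hv2
            · have h1b := cond1b' v hvJ hv2 (by omega)
              exact le_trans (cond1a' w hwJ (by omega))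
                (le_trans (mono (v + 1) (w - 2) (by omega) (by omega) (by omega)) h1b)
      cases rest with
      | nil => simp; omega
      | cons w s =>
        have hchain' := List.isChain_cons_cons.mp hchain
        have hwJ : w ∈ H.J := hmem w (by simp)
        obtain ⟨hw2', hwm'⟩ := jmem w hwJ
        have hwv : v + 2 ≤ w := by
          have hne : w ≠ v + 1 := by
            intro h; exact H.jumps_nonconsec v hvJ (h ▸ hwJ)
          have := hchain'.1
          omega
        have hrest : (w :: s).length ≤ t' := by
          apply ih hchain'.2 (fun x hx => hmem x (List.mem_cons_of_mem _ hx)) t'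
          intro u hu
          have : u = w := by simp at hu; omega
          subst this
          exact ⟨ht'c u hwJ hwv hwm', ht'b u hwJ hwv hwm'⟩
        simp only [List.length_cons] at *
        omega
  -- apply to the sorted jump list
  have hsorted := H.J.sortedLT_sort
  have hchain : (H.J.sort (· ≤ ·)).Chain' (· < ·) := hsorted.isChain
  have hlen : (H.J.sort (· ≤ ·)).length = n := by
    rw [Finset.length_sort, H.jumps_card]
  have hbnd : ∀ x y, (χ x y : ℕ) ≤ n - 1 := by
    intro x y
    have := (χ x y).isLt
    omega
  have := key (H.J.sort (· ≤ ·)) hchain (fun x hx => (Finset.mem_sort _).mp hx) (n - 1)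
    (fun v _ => ⟨hbnd _ _, hbnd _ _⟩)
  omega
end
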